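/- arXiv:2005.09991 — 7 statements merged into one kernel-verified Lean document; each statement's English description precedes it below -/
import Mathlib

section
/- Let p₁ be a positive integer, m ≥ 2, and let I₁ = (x^{p₁}, y^{p₁})(x^{(m+1)p₁}, y^{(m+1)p₁}) in K[x,y]. Then for every positive integer k, I₁^k equals the ideal generated by the monomials x^{s(m+1)p₁ + t p₁} y^{k(m+2)p₁ - s(m+1)p₁ - t p₁} for s, t ∈ {0,1,…,k}. -/
open MvPolynomial

lemma span_pair_pow' {R : Type*} [CommRing R] (x y : R) :
    ∀ k : ℕ, (Ideal.span {x, y}) ^ k =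
      Ideal.span {f | ∃ i, i ≤ k ∧ f = x ^ i * y ^ (k - i)} := by
  intro k
  induction k with
  | zero =>
    simp only [pow_zero, Ideal.one_eq_top]
    symm
    rw [Ideal.eq_top_iff_one]
    exact Ideal.subset_span ⟨0, le_refl 0, by simp⟩
  | succ k ih =>
    rw [pow_succ, ih, Ideal.span_mul_span']
    apply le_antisymm
    · rw [Ideal.span_le]
      rintro f hf
      rw [Set.mem_mul] at hf
      obtain ⟨a, ⟨i, hi, rfl⟩, b, hb, rfl⟩ := hf
      simp only [Set.mem_insert_iff, Set.mem_singleton_iff] at hb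
      rcases hb with rfl | rfl
      · apply Ideal.subset_span
        refine ⟨i + 1, by omega, ?_⟩
        have h : k - i = k + 1 - (i + 1) := by omega
        rw [pow_succ, h]; ring
      · apply Ideal.subset_span
        refine ⟨i, by omega, ?_⟩
        have h : k + 1 - i = (k - i) + 1 := by omega
        rw [h, pow_succ]; ring
    · rw [Ideal.span_le]
      rintro f ⟨i, hi, rfl⟩
      apply Ideal.subset_span
      rw [Set.mem_mul]
      rcases i with _ | j
      · exact ⟨x ^ 0 * y ^ (k - 0), ⟨0, Nat.zero_le _, rfl⟩, y, by simp,
          by simp [pow_succ]⟩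
      · exact ⟨x ^ j * y ^ (k - j), ⟨j, by omega, rfl⟩, x, by simp,
          by rw [Nat.succ_sub_succ, pow_succ]; ring⟩

theorem stmt4 (K : Type*) [Field K] (m p1 : ℕ) (hm : 2 ≤ m) (hp1 : 0 < p1) :
    ∀ k : ℕ, 0 < k →
      (Ideal.span {(X 0 : MvPolynomial (Fin 2) K) ^ p1, X 1 ^ p1} *
        Ideal.span {(X 0 : MvPolynomial (Fin 2) K) ^ ((m + 1) * p1), X 1 ^ ((m + 1) * p1)}) ^ k =
      Ideal.span {f : MvPolynomial (Fin 2) K | ∃ s t, s ≤ k ∧ t ≤ k ∧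
        f = X 0 ^ (s * (m + 1) * p1 + t * p1) *
          X 1 ^ (k * (m + 2) * p1 - (s * (m + 1) * p1 + t * p1))} := by
  intro k hk
  rw [mul_pow, span_pair_pow', span_pair_pow', Ideal.span_mul_span']
  have key : ∀ i j : ℕ, i ≤ k → j ≤ k →
      ((X 0 : MvPolynomial (Fin 2) K) ^ p1) ^ i * (X 1 ^ p1) ^ (k - i) *
        ((X 0 ^ ((m + 1) * p1)) ^ j * (X 1 ^ ((m + 1) * p1)) ^ (k - j)) =
      X 0 ^ (j * (m + 1) * p1 + i * p1) *
        X 1 ^ (k * (m + 2) * p1 - (j * (m + 1) * p1 + i * p1)) := by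
    intro i j hi hj
    have e1 : p1 * i + (m + 1) * p1 * j = j * (m + 1) * p1 + i * p1 := by ring
    have hle : j * (m + 1) * p1 + i * p1 ≤ k * (m + 2) * p1 := by
      calc j * (m + 1) * p1 + i * p1 ≤ k * (m + 1) * p1 + k * p1 := by gcongr
        _ = k * (m + 2) * p1 := by ring
    have e2 : p1 * (k - i) + (m + 1) * p1 * (k - j) =
        k * (m + 2) * p1 - (j * (m + 1) * p1 + i * p1) := by
      zify [hi, hj, hle]; ring
    rw [← e2, ← e1]
    simp only [← pow_mul]
    ring
  apply le_antisymm
  · rw [Ideal.span_le]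
    rintro f hf
    rw [Set.mem_mul] at hf
    obtain ⟨a, ⟨i, hi, rfl⟩, b, ⟨j, hj, rfl⟩, rfl⟩ := hf
    exact Ideal.subset_span ⟨j, i, hj, hi, key i j hi hj⟩
  · rw [Ideal.span_le]
    rintro f ⟨s, t, hs, ht, rfl⟩
    apply Ideal.subset_span
    rw [Set.mem_mul]
    exact ⟨_, ⟨t, ht, rfl⟩, _, ⟨s, hs, rfl⟩, key t s ht hs⟩
end

section
/- Let p₁ be a positive integer, m ≥ 2, and I₁ = (x^{p₁}, y^{p₁})(x^{(m+1)p₁}, y^{(m+1)p₁}) in K[x,y]. For every k ≥ m, I₁^k = (x^{p₁}, y^{p₁})^{k(m+2)}. -/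
/-! Write `J = (f, g)` and `A = (f ^ (m + 1), g ^ (m + 1))`. When `n ≥ m`, every monomial
`f ^ a * g ^ b` with `a + b = n + m + 1` has `a ≥ m + 1` or `b ≥ m + 1`, so
`A * J ^ n = J ^ (n + m + 1)`. Iterating, `A ^ k * J ^ k = J ^ (k * (m + 2))` for `k ≥ m`,
and `(J * A) ^ k = J ^ k * A ^ k`. -/

open MvPolynomial

open scoped Pointwise

theorem Set.exists_pow_mul_pow_of_mem_pair_pow {M : Type*} [CommMonoid M] {f g x : M} {n : ℕ}
    (hx : x ∈ ({f, g} : Set M) ^ n) : ∃ a b : ℕ, a + b = n ∧ x = f ^ a * g ^ b := by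
  induction n generalizing x with
  | zero => exact ⟨0, 0, rfl, by simpa using hx⟩
  | succ n ih =>
    rw [pow_succ] at hx
    obtain ⟨y, hy, z, hz, rfl⟩ := hx
    obtain ⟨a, b, rfl, rfl⟩ := ih hy
    rcases hz with rfl | rfl
    · exact ⟨a + 1, b, by omega, by dsimp only; rw [pow_succ, mul_right_comm]⟩
    · exact ⟨a, b + 1, by omega, by dsimp only; rw [pow_succ, mul_assoc]⟩

namespace Ideal

variable {R : Type*} [CommSemiring R] {f g : R}

theorem pow_mul_pow_mem_span_pair_pow (a b : ℕ) : f ^ a * g ^ b ∈ span {f, g} ^ (a + b) := by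
  rw [pow_add]
  exact mul_mem_mul (pow_mem_pow (subset_span (by simp)) a) (pow_mem_pow (subset_span (by simp)) b)

theorem span_pair_pow_le {n : ℕ} {I : Ideal R}
    (h : ∀ a b : ℕ, a + b = n → f ^ a * g ^ b ∈ I) :
    span {f, g} ^ n ≤ I := by
  rw [show span {f, g} ^ n = span (({f, g} : Set R) ^ n) from Submodule.span_pow _ n, span_le]
  intro x hx
  obtain ⟨a, b, hab, rfl⟩ := Set.exists_pow_mul_pow_of_mem_pair_pow hx
  exact h a b hab

theorem span_pow_pair_le (k : ℕ) : span {f ^ k, g ^ k} ≤ span {f, g} ^ k := by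
  rw [span_le]
  rintro x (rfl | rfl)
  · simpa using pow_mul_pow_mem_span_pair_pow (f := f) (g := g) k 0
  · simpa using pow_mul_pow_mem_span_pair_pow (f := f) (g := g) 0 k

theorem span_pow_pair_mul_span_pair_pow {m n : ℕ} (hmn : m ≤ n) :
    span {f ^ (m + 1), g ^ (m + 1)} * span {f, g} ^ n = span {f, g} ^ (n + m + 1) := by
  apply le_antisymm
  · calc span {f ^ (m + 1), g ^ (m + 1)} * span {f, g} ^ n
          ≤ span {f, g} ^ (m + 1) * span {f, g} ^ n :=
          mul_mono_left (span_pow_pair_le _)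
      _ = span {f, g} ^ (n + m + 1) := by rw [← pow_add]; ring_nf
  · refine span_pair_pow_le fun a b hab => ?_
    have hf : f ^ (m + 1) ∈ span {f ^ (m + 1), g ^ (m + 1)} := subset_span (by simp)
    have hg : g ^ (m + 1) ∈ span {f ^ (m + 1), g ^ (m + 1)} := subset_span (by simp)
    rcases le_or_gt (m + 1) a with ha | ha
    · obtain ⟨c, rfl⟩ := Nat.exists_eq_add_of_le ha
      have hc := pow_mul_pow_mem_span_pair_pow (f := f) (g := g) c b
      rw [show c + b = n by omega] at hc
      rw [show f ^ (m + 1 + c) * g ^ b = f ^ (m + 1) * (f ^ c * g ^ b) by ring]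
      exact mul_mem_mul hf hc
    · obtain ⟨c, rfl⟩ := Nat.exists_eq_add_of_le (show m + 1 ≤ b by omega)
      have hc := pow_mul_pow_mem_span_pair_pow (f := f) (g := g) a c
      rw [show a + c = n by omega] at hc
      rw [show f ^ a * g ^ (m + 1 + c) = g ^ (m + 1) * (f ^ a * g ^ c) by ring]
      exact mul_mem_mul hg hc

theorem span_pow_pair_pow_mul_span_pair_pow {m n : ℕ} (hmn : m ≤ n) (j : ℕ) :
    span {f ^ (m + 1), g ^ (m + 1)} ^ j * span {f, g} ^ n = span {f, g} ^ (n + j * (m + 1)) := by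
  induction j generalizing n with
  | zero => simp
  | succ j ih =>
    rw [pow_succ, mul_assoc, span_pow_pair_mul_span_pair_pow hmn, ih (by omega)]
    ring_nf

theorem span_pair_mul_span_pow_pair_pow {m k : ℕ} (hmk : m ≤ k) :
    (span {f, g} * span {f ^ (m + 1), g ^ (m + 1)}) ^ k = span {f, g} ^ (k * (m + 2)) := by
  rw [mul_pow, mul_comm, span_pow_pair_pow_mul_span_pair_pow hmk]
  ring_nf

end Ideal

theorem stmt5_general (K : Type*) [Field K] (m p1 : ℕ) :
    ∀ k : ℕ, m ≤ k →
      (Ideal.span {(X 0 : MvPolynomial (Fin 2) K) ^ p1, X 1 ^ p1} *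
        Ideal.span {(X 0 : MvPolynomial (Fin 2) K) ^ ((m + 1) * p1), X 1 ^ ((m + 1) * p1)}) ^ k =
      Ideal.span {(X 0 : MvPolynomial (Fin 2) K) ^ p1, X 1 ^ p1} ^ (k * (m + 2)) := by
  intro k hk
  rw [pow_mul' (X 0 : MvPolynomial (Fin 2) K), pow_mul' (X 1 : MvPolynomial (Fin 2) K)]
  exact Ideal.span_pair_mul_span_pow_pair_pow hk

theorem stmt5 (K : Type*) [Field K] (m p1 : ℕ) (hm : 2 ≤ m) (hp1 : 0 < p1) :
    ∀ k : ℕ, m ≤ k →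
      (Ideal.span {(X 0 : MvPolynomial (Fin 2) K) ^ p1, X 1 ^ p1} *
        Ideal.span {(X 0 : MvPolynomial (Fin 2) K) ^ ((m + 1) * p1), X 1 ^ ((m + 1) * p1)}) ^ k =
      Ideal.span {(X 0 : MvPolynomial (Fin 2) K) ^ p1, X 1 ^ p1} ^ (k * (m + 2)) :=
  stmt5_general K m p1
end

section
/- Let p₁ be a positive integer, m ≥ 2, and I₁ = (x^{p₁}, y^{p₁})(x^{(m+1)p₁}, y^{(m+1)p₁}) in K[x,y]. For every k ≥ m, the minimal number of generators of I₁^k is k(m+2)+1. -/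
open MvPolynomial

/-- The minimal number of generators of an ideal. -/
noncomputable def mu {R : Type*} [CommRing R] (I : Ideal R) : ℕ :=
  sInf {n | ∃ s : Finset R, s.card = n ∧ Ideal.span (s : Set R) = I}

/-- An ideal of `K[x,y]` is a monomial ideal if it is generated by monomials. -/
def IsMonomialIdeal {K : Type*} [Field K] (I : Ideal (MvPolynomial (Fin 2) K)) : Prop :=
  ∃ G : Set (Fin 2 →₀ ℕ), I = Ideal.span ((fun d => monomial d (1 : K)) '' G)

/-!
Write `J_q = (x^q, y^q)`, so that the ideal is `J_p J_{(m+1)p}`. For `k ≥ m` its `k`-th power is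
`J_p^{k(m+2)}`: a monomial `x^{pa} y^{pb}` with `a + b = k(m+2)` splits as `a = e + (m+1)c`,
`b = e' + (m+1)c'` with `c + c' = e + e' = k`, i.e. as a generator of `J_p^k` times one of
`J_{(m+1)p}^k`. The ideal `J_p^D` is generated by the `D + 1` monomials `x^{pa} y^{pb}` with
`a + b = D`, which are linearly independent forms of degree `pD`. No element of such an ideal has
terms of degree below `pD`, so taking degree-`pD` components sends any generating set to a spanning
set of the `(D + 1)`-dimensional span of these forms.
-/

section Graded

variable {σ R K : Type*} [CommSemiring R] [Field K]

lemma coeff_mul_eq_zero_of_degree_lt {d : ℕ} (r : MvPolynomial σ R) {f : MvPolynomial σ R}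
    (hf : ∀ u : σ →₀ ℕ, u.degree < d → coeff u f = 0) {u : σ →₀ ℕ}
    (hu : u.degree < d) : coeff u (r * f) = 0 := by
  classical
  rw [coeff_mul]
  refine Finset.sum_eq_zero fun x hx => ?_
  rw [Finset.HasAntidiagonal.mem_antidiagonal] at hx
  have hle : x.2.degree ≤ u.degree := by rw [← hx, map_add]; omega
  rw [hf x.2 (hle.trans_lt hu), mul_zero]

lemma coeff_eq_zero_of_mem_span_of_isHomogeneous {S : Set (MvPolynomial σ R)} {d : ℕ}
    (hS : ∀ g ∈ S, g.IsHomogeneous d) {f : MvPolynomial σ R} (hf : f ∈ Ideal.span S)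
    {u : σ →₀ ℕ} (hu : u.degree < d) : coeff u f = 0 := by
  induction hf using Submodule.span_induction generalizing u with
  | mem g hg => exact (hS g hg).coeff_eq_zero hu.ne
  | zero => exact coeff_zero u
  | add f g _ _ hf hg => rw [coeff_add, hf hu, hg hu, add_zero]
  | smul r f _ hf => exact coeff_mul_eq_zero_of_degree_lt r (fun _ hv => hf hv) hu

lemma homogeneousComponent_mul_of_degree_lt {d : ℕ} (r : MvPolynomial σ R)
    {f : MvPolynomial σ R} (hf : ∀ u : σ →₀ ℕ, u.degree < d → coeff u f = 0) :
    homogeneousComponent d (r * f) = coeff 0 r • homogeneousComponent d f := by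
  classical
  ext u
  rw [coeff_smul, coeff_homogeneousComponent, coeff_homogeneousComponent]
  split_ifs with hu
  · rw [coeff_mul, Finset.sum_eq_single_of_mem (0, u) (by simp), smul_eq_mul]
    rintro ⟨a, b⟩ hab hne
    simp only [Finset.HasAntidiagonal.mem_antidiagonal] at hab
    rcases Nat.eq_zero_or_pos a.degree with ha | ha
    · rw [Finsupp.degree_eq_zero_iff] at ha
      subst ha
      exact absurd (by rw [← hab, zero_add]) hne
    · rw [hf b (by rw [← hu, ← hab, map_add]; omega), mul_zero]
  · rw [smul_zero]

lemma card_le_card_of_span_eq_span_range {ι : Type*} [Fintype ι] {v : ι → MvPolynomial σ K}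
    {d : ℕ} (hv : ∀ i, (v i).IsHomogeneous d) (hli : LinearIndependent K v)
    {s : Finset (MvPolynomial σ K)} (hs : Ideal.span (s : Set _) = Ideal.span (Set.range v)) :
    Fintype.card ι ≤ s.card := by
  classical
  have hrange : ∀ g ∈ Set.range v, g.IsHomogeneous d := by rintro _ ⟨i, rfl⟩; exact hv i
  have hspan : Set.range v ⊆
      Submodule.span K (s.image (homogeneousComponent d) : Set (MvPolynomial σ K)) := by
    rintro _ ⟨i, rfl⟩
    have hvi : v i ∈ Ideal.span (s : Set _) := hs ▸ Ideal.subset_span ⟨i, rfl⟩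
    obtain ⟨c, -, hc⟩ := Submodule.mem_span_finset.mp hvi
    rw [← homogeneousComponent_eq_self (hv i), ← hc, map_sum]
    refine Submodule.sum_mem _ fun g hg => ?_
    rw [smul_eq_mul, homogeneousComponent_mul_of_degree_lt _ fun u hu =>
      coeff_eq_zero_of_mem_span_of_isHomogeneous hrange (hs ▸ Ideal.subset_span hg) hu]
    exact Submodule.smul_mem _ _ (Submodule.subset_span (by simpa using ⟨g, hg, rfl⟩))
  calc Fintype.card ι ≤ (s.image (homogeneousComponent d)).card := by
        simpa using linearIndependent_le_span' v hli _ hspan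
    _ ≤ s.card := Finset.card_image_le

lemma mu_span_range_eq_card {ι : Type*} [Fintype ι] {v : ι → MvPolynomial σ K} {d : ℕ}
    (hv : ∀ i, (v i).IsHomogeneous d) (hli : LinearIndependent K v) :
    mu (Ideal.span (Set.range v)) = Fintype.card ι := by
  classical
  refine IsLeast.csInf_eq
    ⟨⟨Finset.univ.image v, Finset.card_image_of_injective _ hli.injective, by simp⟩, ?_⟩
  rintro n ⟨s, rfl, hs⟩
  exact card_le_card_of_span_eq_span_range hv hli hs

end Graded

lemma exists_eq_add_mul_of_add_eq {m k a b : ℕ} (hk : m ≤ k) (hab : a + b = k * (m + 2)) :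
    ∃ c c' e e', c + c' = k ∧ e + e' = k ∧ a = e + (m + 1) * c ∧ b = e' + (m + 1) * c' := by
  by_cases ha : (m + 1) * k ≤ a
  · obtain ⟨e, rfl⟩ := Nat.exists_eq_add_of_le ha
    exact ⟨k, 0, e, b, by omega, by linarith, by ring, by ring⟩
  · have hc : a / (m + 1) < k := (Nat.div_lt_iff_lt_mul (by omega)).mpr (by linarith)
    have he : a % (m + 1) ≤ k := (Nat.le_of_lt_succ (Nat.mod_lt _ (by omega))).trans hk
    obtain ⟨c', hc'⟩ := Nat.exists_eq_add_of_le hc.le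
    obtain ⟨e', he'⟩ := Nat.exists_eq_add_of_le he
    have hdiv := Nat.mod_add_div a (m + 1)
    refine ⟨a / (m + 1), c', a % (m + 1), e', hc'.symm, he'.symm, hdiv.symm, ?_⟩
    subst hc'
    linarith

section TwoVariables

open Finset.HasAntidiagonal

variable (R K : Type*) [CommSemiring R] [Field K]

noncomputable def spanPowXY (p : ℕ) : Ideal (MvPolynomial (Fin 2) R) :=
  Ideal.span {X 0 ^ p, X 1 ^ p}

noncomputable def monomialXY (p : ℕ) (ab : ℕ × ℕ) : MvPolynomial (Fin 2) R :=
  X 0 ^ (p * ab.1) * X 1 ^ (p * ab.2)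

variable {R}

lemma monomialXY_isHomogeneous (p : ℕ) (ab : ℕ × ℕ) :
    (monomialXY R p ab).IsHomogeneous (p * (ab.1 + ab.2)) := by
  rw [mul_add]
  exact (isHomogeneous_X_pow _ _).mul (isHomogeneous_X_pow _ _)

lemma linearIndependent_monomialXY {p : ℕ} (hp : 0 < p) :
    LinearIndependent K (monomialXY K p) := by
  let e : ℕ × ℕ → Fin 2 →₀ ℕ := fun ab =>
    Finsupp.single 0 (p * ab.1) + Finsupp.single 1 (p * ab.2)
  have he : Function.Injective e := fun ab ab' h =>
    Prod.ext (by simpa [e, hp.ne'] using DFunLike.congr_fun h 0)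
      (by simpa [e, hp.ne'] using DFunLike.congr_fun h 1)
  have hfun : monomialXY K p = basisMonomials (Fin 2) K ∘ e := by
    ext1 ab
    simp [e, monomialXY, X_pow_eq_monomial, monomial_mul]
  rw [hfun]
  exact (basisMonomials (Fin 2) K).linearIndependent.comp e he

lemma monomialXY_mem_pow (p : ℕ) (ab : ℕ × ℕ) :
    monomialXY R p ab ∈ spanPowXY R p ^ (ab.1 + ab.2) := by
  rw [pow_add, monomialXY, pow_mul, pow_mul]
  exact Ideal.mul_mem_mul (Ideal.pow_mem_pow (Ideal.subset_span (by simp)) _)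
    (Ideal.pow_mem_pow (Ideal.subset_span (by simp)) _)

lemma pow_spanPowXY (p D : ℕ) :
    spanPowXY R p ^ D = Ideal.span (monomialXY R p '' antidiagonal D) := by
  refine le_antisymm ?_ (Ideal.span_le.mpr ?_)
  · induction D with
    | zero => simp [monomialXY]
    | succ D ih =>
      rw [pow_succ]
      refine (Ideal.mul_mono_left ih).trans ?_
      rw [spanPowXY, Ideal.span_mul_span', Ideal.span_le]
      rintro _ ⟨_, ⟨⟨a, b⟩, hab, rfl⟩, _, hg, rfl⟩
      rw [Finset.mem_coe, mem_antidiagonal] at hab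
      refine Ideal.subset_span ?_
      rcases hg with rfl | rfl
      · exact ⟨(a + 1, b), mem_antidiagonal.mpr (by dsimp only; omega),
          by simp only [monomialXY]; ring⟩
      · exact ⟨(a, b + 1), mem_antidiagonal.mpr (by dsimp only; omega),
          by simp only [monomialXY]; ring⟩
  · rintro _ ⟨ab, hab, rfl⟩
    rw [Finset.mem_coe, mem_antidiagonal] at hab
    exact hab ▸ monomialXY_mem_pow p ab

lemma mu_pow_spanPowXY {p : ℕ} (hp : 0 < p) (D : ℕ) : mu (spanPowXY K p ^ D) = D + 1 := by
  rw [pow_spanPowXY, Set.image_eq_range]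
  refine (mu_span_range_eq_card (d := p * D)
    (fun ⟨ab, hab⟩ => (mem_antidiagonal.mp hab) ▸ monomialXY_isHomogeneous p ab)
    ((linearIndependent_monomialXY K hp).comp _ Subtype.val_injective)).trans ?_
  simp

lemma spanPowXY_mul_pow_eq {m k : ℕ} (p : ℕ) (hk : m ≤ k) :
    (spanPowXY R p * spanPowXY R ((m + 1) * p)) ^ k = spanPowXY R p ^ (k * (m + 2)) := by
  refine le_antisymm ?_ ?_
  · have hle : spanPowXY R ((m + 1) * p) ≤ spanPowXY R p ^ (m + 1) := by
      refine Ideal.span_le.mpr ?_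
      rintro _ (rfl | rfl) <;>
        · rw [pow_mul']
          exact Ideal.pow_mem_pow (Ideal.subset_span (by simp)) _
    calc (spanPowXY R p * spanPowXY R ((m + 1) * p)) ^ k
        ≤ (spanPowXY R p ^ (m + 2)) ^ k := Ideal.pow_right_mono (by
          rw [pow_succ']; exact Ideal.mul_mono_right hle) k
      _ = spanPowXY R p ^ (k * (m + 2)) := by rw [← pow_mul, mul_comm]
  · rw [pow_spanPowXY, Ideal.span_le, mul_pow]
    rintro _ ⟨⟨a, b⟩, hab, rfl⟩
    simp only [Finset.mem_coe, mem_antidiagonal] at hab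
    obtain ⟨c, c', e, e', hc, he, rfl, rfl⟩ := exists_eq_add_mul_of_add_eq hk hab
    have hsplit : monomialXY R p (e + (m + 1) * c, e' + (m + 1) * c') =
        monomialXY R p (e, e') * monomialXY R ((m + 1) * p) (c, c') := by
      simp only [monomialXY]; ring
    rw [hsplit]
    exact Ideal.mul_mem_mul (he ▸ monomialXY_mem_pow p (e, e'))
      (hc ▸ monomialXY_mem_pow _ (c, c'))

end TwoVariables

theorem stmt6_general (K : Type*) [Field K] (m p1 : ℕ) (hp1 : 0 < p1) :
    ∀ k : ℕ, m ≤ k →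
      mu ((Ideal.span {(X 0 : MvPolynomial (Fin 2) K) ^ p1, X 1 ^ p1} *
        Ideal.span {(X 0 : MvPolynomial (Fin 2) K) ^ ((m + 1) * p1), X 1 ^ ((m + 1) * p1)}) ^ k) =
      k * (m + 2) + 1 := by
  intro k hk
  change mu ((spanPowXY K p1 * spanPowXY K ((m + 1) * p1)) ^ k) = _
  rw [spanPowXY_mul_pow_eq p1 hk, mu_pow_spanPowXY K hp1]

theorem stmt6 (K : Type*) [Field K] (m p1 : ℕ) (hm : 2 ≤ m) (hp1 : 0 < p1) :
    ∀ k : ℕ, m ≤ k →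
      mu ((Ideal.span {(X 0 : MvPolynomial (Fin 2) K) ^ p1, X 1 ^ p1} *
        Ideal.span {(X 0 : MvPolynomial (Fin 2) K) ^ ((m + 1) * p1), X 1 ^ ((m + 1) * p1)}) ^ k) =
      k * (m + 2) + 1 :=
  stmt6_general K m p1 hp1
end

section
/- Under the hypotheses of the main construction, deg(I₁²) < deg(I₁I₂) < ⋯ < deg(I₁I_m), and deg(I₁I_m) < deg(I_iI_j) for all 2 ≤ i,j ≤ m. -/
open MvPolynomial

/-- The initial degree of a graded ideal: the smallest degree of a nonzero
homogeneous element of `I`. -/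
noncomputable def idealDeg {K : Type*} [Field K] (I : Ideal (MvPolynomial (Fin 2) K)) : ℕ :=
  sInf {d | ∃ f ∈ I, f ≠ 0 ∧ f.IsHomogeneous d}

/-- all exponents in `f` have degree ≥ D -/
def LBD {K : Type*} [Field K] (D : ℕ) (f : MvPolynomial (Fin 2) K) : Prop :=
  ∀ v, f.coeff v ≠ 0 → D ≤ (Finsupp.weight 1 v : ℕ)

section helpers
variable {K : Type*} [Field K]

lemma lbd_zero (D : ℕ) : LBD D (0 : MvPolynomial (Fin 2) K) := by
  intro v hv; simp at hv

lemma lbd_add {D : ℕ} {f g : MvPolynomial (Fin 2) K} (hf : LBD D f) (hg : LBD D g) :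
    LBD D (f + g) := by
  intro v hv
  rw [coeff_add] at hv
  rcases ne_or_eq (f.coeff v) 0 with h | h
  · exact hf v h
  · exact hg v (by simpa [h] using hv)

lemma lbd_mul {D₁ D₂ : ℕ} {f g : MvPolynomial (Fin 2) K} (hf : LBD D₁ f) (hg : LBD D₂ g) :
    LBD (D₁ + D₂) (f * g) := by
  intro v hv
  have hv' : v ∈ (f * g).support := by simpa [mem_support_iff] using hv
  have := MvPolynomial.support_mul f g hv'
  rw [Finset.mem_add] at this
  obtain ⟨a, ha, b, hb, rfl⟩ := this
  rw [map_add]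
  exact Nat.add_le_add (hf a (by simpa [mem_support_iff] using ha))
    (hg b (by simpa [mem_support_iff] using hb))

lemma lbd_of_homog {D d : ℕ} {f : MvPolynomial (Fin 2) K} (hf : f.IsHomogeneous d)
    (hD : D ≤ d) : LBD D f := by
  intro v hv
  rw [hf hv]; exact hD

lemma lbd_span {S : Set (MvPolynomial (Fin 2) K)} {D : ℕ} (h : ∀ g ∈ S, LBD D g) :
    ∀ f ∈ Ideal.span S, LBD D f := by
  intro f hf
  refine Submodule.span_induction (fun g hg => h g hg) (lbd_zero D)
    (fun a b _ _ ha hb => lbd_add ha hb) ?_ hf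
  intro r x _ hx
  have : LBD (0 + D) (r * x) := lbd_mul (fun v _ => Nat.zero_le _) hx
  simpa using this

lemma lbd_idealmul {I J : Ideal (MvPolynomial (Fin 2) K)} {D₁ D₂ : ℕ}
    (hI : ∀ f ∈ I, LBD D₁ f) (hJ : ∀ f ∈ J, LBD D₂ f) :
    ∀ f ∈ I * J, LBD (D₁ + D₂) f := by
  intro f hf
  exact Submodule.mul_induction_on hf (fun a ha b hb => lbd_mul (hI a ha) (hJ b hb))
    (fun a b ha hb => lbd_add ha hb)

lemma lbd_idealpow {I : Ideal (MvPolynomial (Fin 2) K)} {D : ℕ}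
    (hI : ∀ f ∈ I, LBD D f) (n : ℕ) :
    ∀ f ∈ I ^ n, LBD (n * D) f := by
  induction n with
  | zero => intro f _ v _; simp
  | succ k ih =>
      intro f hf
      rw [pow_succ] at hf
      have := lbd_idealmul ih hI f hf
      simpa [add_mul, Nat.succ_mul] using this

lemma idealDeg_eq {I : Ideal (MvPolynomial (Fin 2) K)} {D : ℕ}
    (hlb : ∀ f ∈ I, LBD D f) (g : MvPolynomial (Fin 2) K) (hg : g ∈ I) (hg0 : g ≠ 0)
    (hgh : g.IsHomogeneous D) : idealDeg I = D := by
  refine le_antisymm (Nat.sInf_le ⟨g, hg, hg0, hgh⟩) ?_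
  refine le_csInf ⟨D, g, hg, hg0, hgh⟩ ?_
  rintro d ⟨f, hf, hf0, hfh⟩
  obtain ⟨v, hv⟩ := MvPolynomial.exists_coeff_ne_zero hf0
  have := hlb f hf v hv
  rwa [hfh hv] at this

/-- "good" packaging: lower bound plus witness -/
def GoodI (D : ℕ) (I : Ideal (MvPolynomial (Fin 2) K)) : Prop :=
  (∀ f ∈ I, LBD D f) ∧ ∃ g ∈ I, g ≠ 0 ∧ g.IsHomogeneous D

lemma idealDeg_mul_eq {I J : Ideal (MvPolynomial (Fin 2) K)} {D₁ D₂ : ℕ}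
    (hI : GoodI D₁ I) (hJ : GoodI D₂ J) : idealDeg (I * J) = D₁ + D₂ := by
  obtain ⟨hIlb, g₁, hg₁, hg₁0, hg₁h⟩ := hI
  obtain ⟨hJlb, g₂, hg₂, hg₂0, hg₂h⟩ := hJ
  exact idealDeg_eq (lbd_idealmul hIlb hJlb) (g₁ * g₂) (Ideal.mul_mem_mul hg₁ hg₂)
    (mul_ne_zero hg₁0 hg₂0) (hg₁h.mul hg₂h)

lemma goodI_span_pair (n : ℕ) :
    GoodI n (Ideal.span {X 0 ^ n, X 1 ^ n} : Ideal (MvPolynomial (Fin 2) K)) := by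
  constructor
  · refine lbd_span ?_
    intro g hg
    simp only [Set.mem_insert_iff, Set.mem_singleton_iff] at hg
    rcases hg with rfl | rfl <;> exact lbd_of_homog (isHomogeneous_X_pow _ _) le_rfl
  · exact ⟨X 0 ^ n, Ideal.subset_span (Set.mem_insert _ _),
      pow_ne_zero _ (MvPolynomial.X_ne_zero _), isHomogeneous_X_pow _ _⟩

lemma goodI_span_single (A B : ℕ) :
    GoodI (A + B) (Ideal.span {X 0 ^ A * X 1 ^ B} : Ideal (MvPolynomial (Fin 2) K)) := by
  constructor
  · refine lbd_span ?_
    intro g hg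
    rw [Set.mem_singleton_iff] at hg
    subst hg
    exact lbd_of_homog ((isHomogeneous_X_pow _ _).mul (isHomogeneous_X_pow _ _)) le_rfl
  · exact ⟨X 0 ^ A * X 1 ^ B, Ideal.subset_span rfl,
      mul_ne_zero (pow_ne_zero _ (MvPolynomial.X_ne_zero _))
        (pow_ne_zero _ (MvPolynomial.X_ne_zero _)),
      (isHomogeneous_X_pow _ _).mul (isHomogeneous_X_pow _ _)⟩

lemma goodI_congr {D D' : ℕ} {I : Ideal (MvPolynomial (Fin 2) K)} (h : GoodI D I)
    (hD : D = D') : GoodI D' I := hD ▸ h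

lemma goodI_mul {D₁ D₂ : ℕ} {I J : Ideal (MvPolynomial (Fin 2) K)}
    (hI : GoodI D₁ I) (hJ : GoodI D₂ J) : GoodI (D₁ + D₂) (I * J) := by
  obtain ⟨hIlb, g₁, hg₁, hg₁0, hg₁h⟩ := hI
  obtain ⟨hJlb, g₂, hg₂, hg₂0, hg₂h⟩ := hJ
  exact ⟨lbd_idealmul hIlb hJlb, g₁ * g₂, Ideal.mul_mem_mul hg₁ hg₂,
    mul_ne_zero hg₁0 hg₂0, hg₁h.mul hg₂h⟩

lemma goodI_pow {D : ℕ} {I : Ideal (MvPolynomial (Fin 2) K)} (hI : GoodI D I) (n : ℕ) :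
    GoodI (n * D) (I ^ n) := by
  obtain ⟨hIlb, g, hg, hg0, hgh⟩ := hI
  refine ⟨lbd_idealpow hIlb n, g ^ n, Ideal.pow_mem_pow hg n, pow_ne_zero _ hg0, ?_⟩
  simpa [mul_comm] using hgh.pow n

end helpers

theorem stmt11 (K : Type*) [Field K] (m : ℕ) (hm : 2 ≤ m) (p a : ℕ → ℕ)
    (hp1 : 2 ≤ p 1) (hp : ∀ i, 2 ≤ i → i ≤ m → 2 ≤ p i)
    (ha : ∀ i, 2 ≤ i → i ≤ m → 2 ≤ a i)
    (hpa : ∀ i, 2 ≤ i → i ≤ m → p 1 = (a i + 1) * p i)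
    (hsum : ∑ j ∈ Finset.Icc 2 (m - 1), p j < p 1)
    (I : ℕ → Ideal (MvPolynomial (Fin 2) K))
    (hI1 : I 1 = Ideal.span {X 0 ^ p 1, X 1 ^ p 1} *
        Ideal.span {X 0 ^ ((m + 1) * p 1), X 1 ^ ((m + 1) * p 1)})
    (hIi : ∀ i, 2 ≤ i → i ≤ m → I i =
        Ideal.span {X 0 ^ (i * p 1 + p i) *
            X 1 ^ ((m + 2 - i) * p 1 + ∑ j ∈ Finset.Icc 2 i, p j)} *
          Ideal.span {X 0 ^ p i, X 1 ^ p i} ^ (a i - 1)) :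
    (∀ u, 1 ≤ u → u < m → idealDeg (I 1 * I u) < idealDeg (I 1 * I (u + 1))) ∧
    (∀ i j, 2 ≤ i → i ≤ m → 2 ≤ j → j ≤ m →
      idealDeg (I 1 * I m) < idealDeg (I i * I j)) := by
  -- notation
  have hapi : ∀ i, 2 ≤ i → i ≤ m → a i * p i + p i = p 1 := by
    intro i h2 him
    rw [hpa i h2 him, add_mul, one_mul]
  -- the key degree computations
  have hgood1 : GoodI ((m + 2) * p 1) (I 1) := by
    rw [hI1]
    refine goodI_congr (goodI_mul (goodI_span_pair _) (goodI_span_pair _)) ?_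
    ring
  have hgood2 : ∀ i, 2 ≤ i → i ≤ m →
      GoodI ((m + 2) * p 1 + a i * p i + ∑ j ∈ Finset.Icc 2 i, p j) (I i) := by
    intro i h2 him
    rw [hIi i h2 him]
    refine goodI_congr (goodI_mul (goodI_span_single _ _)
      (goodI_pow (goodI_span_pair (p i)) (a i - 1))) ?_
    have e1 : i * p 1 + (m + 2 - i) * p 1 = (m + 2) * p 1 := by
      rw [← add_mul, show i + (m + 2 - i) = m + 2 by omega]
    have e2 : (a i - 1) * p i + p i = a i * p i := by
      have h : 2 ≤ a i := ha i h2 him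
      calc (a i - 1) * p i + p i = (a i - 1 + 1) * p i := by ring
        _ = a i * p i := by rw [show a i - 1 + 1 = a i by omega]
    linarith [e1, e2]
  -- degrees of products
  have hd11 : idealDeg (I 1 * I 1) = (m + 2) * p 1 + (m + 2) * p 1 :=
    idealDeg_mul_eq hgood1 hgood1
  have hd1u : ∀ u, 2 ≤ u → u ≤ m → idealDeg (I 1 * I u) =
      (m + 2) * p 1 + ((m + 2) * p 1 + a u * p u + ∑ j ∈ Finset.Icc 2 u, p j) := by
    intro u h2 hum
    exact idealDeg_mul_eq hgood1 (hgood2 u h2 hum)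
  have hdij : ∀ i j, 2 ≤ i → i ≤ m → 2 ≤ j → j ≤ m → idealDeg (I i * I j) =
      ((m + 2) * p 1 + a i * p i + ∑ k ∈ Finset.Icc 2 i, p k) +
      ((m + 2) * p 1 + a j * p j + ∑ k ∈ Finset.Icc 2 j, p k) := by
    intro i j hi2 him hj2 hjm
    exact idealDeg_mul_eq (hgood2 i hi2 him) (hgood2 j hj2 hjm)
  constructor
  · intro u hu1 hum
    rcases eq_or_lt_of_le hu1 with rfl | hu2
    · -- u = 1
      rw [hd11, hd1u 2 le_rfl (by omega)]
      have hS2 : ∑ j ∈ Finset.Icc 2 2, p j = p 2 := by simp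
      have := hp 2 le_rfl (by omega)
      have h4 := hapi 2 le_rfl (by omega)
      linarith
    · -- 2 ≤ u
      have h2u : 2 ≤ u := hu2
      rw [hd1u u h2u (by omega), hd1u (u + 1) (by omega) (by omega)]
      have hS : ∑ j ∈ Finset.Icc 2 (u + 1), p j =
          (∑ j ∈ Finset.Icc 2 u, p j) + p (u + 1) :=
        Finset.sum_Icc_succ_top (by omega) _
      have h1 := hapi u h2u (by omega)
      have h2 := hapi (u + 1) (by omega) (by omega)
      have h3 := hp u h2u (by omega)
      linarith
  · intro i j hi2 him hj2 hjm
    rw [hd1u m hm le_rfl, hdij i j hi2 him hj2 hjm]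
    have hm1 : m - 1 + 1 = m := by omega
    have hSm : ∑ j ∈ Finset.Icc 2 m, p j =
        (∑ j ∈ Finset.Icc 2 (m - 1), p j) + p m := by
      conv_lhs => rw [← hm1]
      rw [Finset.sum_Icc_succ_top (by omega), hm1]
    have hSi : p i ≤ ∑ k ∈ Finset.Icc 2 i, p k :=
      Finset.single_le_sum (fun _ _ => Nat.zero_le _) (Finset.mem_Icc.mpr ⟨hi2, le_rfl⟩)
    have hSj : p j ≤ ∑ k ∈ Finset.Icc 2 j, p k :=
      Finset.single_le_sum (fun _ _ => Nat.zero_le _) (Finset.mem_Icc.mpr ⟨hj2, le_rfl⟩)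
    have h1 := hapi m hm le_rfl
    have h2 := hapi i hi2 him
    have h3 := hapi j hj2 hjm
    linarith
end

section
/- Under the hypotheses of the main construction, for k > 0 and 2 ≤ u ≤ m, the ideal I₁^{k-1} I_u is generated by the monomials x^α y^{(k-1)d₁+d_u-α} where α = {s(m+1)+t+u}p₁ + v p_u with s,t ∈ {0,…,k-1}, v ∈ {1,…,a_u}, and d₁ = (m+2)p₁, d_u = deg(I_u). -/
open MvPolynomial


lemma aux_span_pair_pow {R : Type*} [CommSemiring R] (a b : R) (n : ℕ) :
    Ideal.span {a, b} ^ n = Ideal.span {f : R | ∃ i ≤ n, f = a ^ i * b ^ (n - i)} := by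
  induction n with
  | zero =>
    have h : {f : R | ∃ i ≤ 0, f = a ^ i * b ^ (0 - i)} = {1} := by
      ext f
      constructor
      · rintro ⟨i, hi, rfl⟩
        simp [Nat.le_zero.mp hi]
      · rintro rfl
        exact ⟨0, le_rfl, by simp⟩
    rw [pow_zero, h, Ideal.span_singleton_one, Ideal.one_eq_top]
  | succ n ih =>
    rw [pow_succ, ih, Ideal.span_mul_span']
    apply le_antisymm
    · rw [Ideal.span_le]
      rintro f hf
      rw [Set.mem_mul] at hf
      obtain ⟨g, ⟨i, hi, rfl⟩, c, hc, rfl⟩ := hf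
      rcases hc with rfl | rfl
      · exact Ideal.subset_span ⟨i + 1, by omega, by rw [Nat.succ_sub_succ]; ring⟩
      · exact Ideal.subset_span ⟨i, by omega, by rw [Nat.succ_sub hi, pow_succ]; ring⟩
    · rw [Ideal.span_le]
      rintro f ⟨i, hi, rfl⟩
      rcases Nat.lt_or_ge i (n + 1) with h | h
      · have he : a ^ i * b ^ (n + 1 - i) = (a ^ i * b ^ (n - i)) * b := by
          rw [show n + 1 - i = (n - i) + 1 by omega]; ring
        rw [he]
        exact Ideal.subset_span (Set.mul_mem_mul ⟨i, by omega, rfl⟩ (by simp))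
      · have hi' : i = n + 1 := le_antisymm hi h
        subst hi'
        have he : a ^ (n + 1) * b ^ (n + 1 - (n + 1)) = (a ^ n * b ^ (n - n)) * a := by
          simp [pow_succ]
        rw [he]
        exact Ideal.subset_span (Set.mul_mem_mul ⟨n, le_rfl, rfl⟩ (by simp))

lemma mem_span_pair_pow {R : Type*} [CommSemiring R] (a b : R) {n i : ℕ} (hi : i ≤ n) :
    a ^ i * b ^ (n - i) ∈ Ideal.span {a, b} ^ n := by
  rw [aux_span_pair_pow]; exact Ideal.subset_span ⟨i, hi, rfl⟩


lemma idealDeg_span {K : Type*} [Field K] (S : Set (MvPolynomial (Fin 2) K)) (d : ℕ)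
    (hhom : ∀ f ∈ S, f.IsHomogeneous d) (hne : ∃ f ∈ S, f ≠ 0) :
    idealDeg (Ideal.span S) = d := by
  obtain ⟨g, hgS, hg0⟩ := hne
  have hub : ∀ f ∈ Ideal.span S, ∀ μ ∈ f.support, d ≤ Finsupp.weight 1 μ := by
    intro f hf
    refine Submodule.span_induction ?_ ?_ ?_ ?_ hf
    · intro x hx μ hμ
      exact le_of_eq (hhom x hx (MvPolynomial.mem_support_iff.mp hμ)).symm
    · intro μ hμ
      simp at hμ
    · intro x y hx hy ihx ihy μ hμ
      rcases Finset.mem_union.mp (MvPolynomial.support_add hμ) with h | h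
      · exact ihx μ h
      · exact ihy μ h
    · intro r x hx ihx μ hμ
      rw [smul_eq_mul] at hμ
      have h2 := MvPolynomial.support_mul r x hμ
      rw [Finset.mem_add] at h2
      obtain ⟨μ1, h1, μ2, h2, rfl⟩ := h2
      rw [map_add]
      exact le_add_left (ihx μ2 h2)
  unfold idealDeg
  apply le_antisymm
  · have hd : d ∈ {d | ∃ f ∈ Ideal.span S, f ≠ 0 ∧ f.IsHomogeneous d} :=
      ⟨g, Ideal.subset_span hgS, hg0, hhom g hgS⟩
    exact Nat.sInf_le hd
  · have hd : d ∈ {d | ∃ f ∈ Ideal.span S, f ≠ 0 ∧ f.IsHomogeneous d} :=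
      ⟨g, Ideal.subset_span hgS, hg0, hhom g hgS⟩
    apply le_csInf ⟨d, hd⟩
    rintro e ⟨f, hf, hf0, hfe⟩
    obtain ⟨μ, hμ⟩ := (MvPolynomial.support_nonempty (p := f)).mpr hf0
    have h1 : Finsupp.weight 1 μ = e := hfe (MvPolynomial.mem_support_iff.mp hμ)
    have h2 := hub f hf μ hμ
    omega


lemma arith1 (P Q SS m u A i : ℕ) (hu : u ≤ m) (hA : 1 ≤ A) (hi : i ≤ A - 1) :
    (u * P + Q) + ((m + 2 - u) * P + SS) + (Q * i + Q * (A - 1 - i)) =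
      (m + 2) * P + A * Q + SS := by
  obtain ⟨w, hw1, hw2⟩ : ∃ w, m + 2 = u + w ∧ m + 2 - u = w := ⟨m + 2 - u, by omega, rfl⟩
  obtain ⟨j, hj1, hj2⟩ : ∃ j, A = i + j + 1 ∧ A - 1 - i = j := ⟨A - 1 - i, by omega, rfl⟩
  rw [hw2, hj2, hw1, hj1]; ring

lemma key {K : Type*} [Field K] (P Q SS m u A K1 s t v : ℕ)
    (hum : u ≤ m) (hA : 1 ≤ A) (hs : s ≤ K1) (ht : t ≤ K1) (hv1 : 1 ≤ v) (hv : v ≤ A) :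
    ((X 0 ^ P) ^ t * (X 1 ^ P) ^ (K1 - t) *
        ((X 0 ^ ((m + 1) * P)) ^ s * (X 1 ^ ((m + 1) * P)) ^ (K1 - s))) *
      ((X 0 ^ (u * P + Q) * X 1 ^ ((m + 2 - u) * P + SS)) *
        ((X 0 ^ Q) ^ (v - 1) * (X 1 ^ Q) ^ (A - 1 - (v - 1)))) =
    (X 0 : MvPolynomial (Fin 2) K) ^ ((s * (m + 1) + t + u) * P + v * Q) *
      X 1 ^ (K1 * ((m + 2) * P) + ((m + 2) * P + A * Q + SS) -
        ((s * (m + 1) + t + u) * P + v * Q)) := by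
  obtain ⟨t', ht1, ht2⟩ : ∃ t', K1 = t + t' ∧ K1 - t = t' := ⟨K1 - t, by omega, rfl⟩
  obtain ⟨s', hs1, hs2⟩ : ∃ s', K1 = s + s' ∧ K1 - s = s' := ⟨K1 - s, by omega, rfl⟩
  obtain ⟨w, hw1, hw2⟩ : ∃ w, m + 2 = u + w ∧ m + 2 - u = w := ⟨_, by omega, rfl⟩
  obtain ⟨v', hv1', hv2'⟩ : ∃ v', v = v' + 1 ∧ v - 1 = v' := ⟨_, by omega, rfl⟩
  rw [ht2, hs2, hw2, hv2']
  obtain ⟨j, hj1, hj2⟩ : ∃ j, A = v' + j + 1 ∧ A - 1 - v' = j := ⟨_, by omega, rfl⟩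
  rw [hj2]
  have hsub : K1 * ((m + 2) * P) + ((m + 2) * P + A * Q + SS) -
      ((s * (m + 1) + t + u) * P + v * Q) =
      t' * P + s' * ((m + 1) * P) + (w * P + SS) + j * Q := by
    apply Nat.sub_eq_of_eq_add
    have hK : K1 * ((m + 2) * P) = (s + s') * ((m + 1) * P) + (t + t') * P := by
      rw [← hs1, ← ht1]; ring
    rw [hK, hw1, hj1, hv1']
    ring
  rw [hsub, hv1']
  simp only [← pow_mul]
  rw [show (s * (m + 1) + t + u) * P + (v' + 1) * Q =
      P * t + ((m + 1) * P * s + ((u * P + Q) + Q * v')) from by ring,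
    show t' * P + s' * ((m + 1) * P) + (w * P + SS) + j * Q =
      P * t' + ((m + 1) * P * s' + ((w * P + SS) + Q * j)) from by ring,
    pow_add, pow_add, pow_add, pow_add, pow_add, pow_add]
  ring


theorem stmt12 (K : Type*) [Field K] (m : ℕ) (hm : 2 ≤ m) (p a : ℕ → ℕ)
    (hp1 : 2 ≤ p 1) (hp : ∀ i, 2 ≤ i → i ≤ m → 2 ≤ p i)
    (ha : ∀ i, 2 ≤ i → i ≤ m → 2 ≤ a i)
    (hpa : ∀ i, 2 ≤ i → i ≤ m → p 1 = (a i + 1) * p i)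
    (hsum : ∑ j ∈ Finset.Icc 2 (m - 1), p j < p 1)
    (I : ℕ → Ideal (MvPolynomial (Fin 2) K))
    (hI1 : I 1 = Ideal.span {X 0 ^ p 1, X 1 ^ p 1} *
        Ideal.span {X 0 ^ ((m + 1) * p 1), X 1 ^ ((m + 1) * p 1)})
    (hIi : ∀ i, 2 ≤ i → i ≤ m → I i =
        Ideal.span {X 0 ^ (i * p 1 + p i) *
            X 1 ^ ((m + 2 - i) * p 1 + ∑ j ∈ Finset.Icc 2 i, p j)} *
          Ideal.span {X 0 ^ p i, X 1 ^ p i} ^ (a i - 1)) :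
    ∀ k, 0 < k → ∀ u, 2 ≤ u → u ≤ m →
      I 1 ^ (k - 1) * I u =
        Ideal.span {f : MvPolynomial (Fin 2) K | ∃ s t v, s ≤ k - 1 ∧ t ≤ k - 1 ∧
          1 ≤ v ∧ v ≤ a u ∧
          f = X 0 ^ ((s * (m + 1) + t + u) * p 1 + v * p u) *
            X 1 ^ ((k - 1) * ((m + 2) * p 1) + idealDeg (I u) -
              ((s * (m + 1) + t + u) * p 1 + v * p u))} := by
  intro k hk u hu2 hum
  have hA2 : 2 ≤ a u := ha u hu2 hum
  have hA1 : 1 ≤ a u := by omega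
  have hdeg : idealDeg (I u) =
      (m + 2) * p 1 + a u * p u + ∑ j ∈ Finset.Icc 2 u, p j := by
    rw [hIi u hu2 hum, aux_span_pair_pow, Ideal.span_mul_span']
    apply idealDeg_span
    · intro f hf
      rw [Set.mem_mul] at hf
      obtain ⟨g5, hg5, g6, ⟨i, hi, rfl⟩, rfl⟩ := hf
      rw [Set.mem_singleton_iff] at hg5; subst hg5
      have h := ((isHomogeneous_X_pow (R := K) (0 : Fin 2) (u * p 1 + p u)).mul
          (isHomogeneous_X_pow (R := K) (1 : Fin 2)
            ((m + 2 - u) * p 1 + ∑ j ∈ Finset.Icc 2 u, p j))).mul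
        (((isHomogeneous_X_pow (R := K) (0 : Fin 2) (p u)).pow i).mul
          ((isHomogeneous_X_pow (R := K) (1 : Fin 2) (p u)).pow (a u - 1 - i)))
      rw [arith1 (p 1) (p u) _ m u (a u) i hum hA1 hi] at h
      exact h
    · refine ⟨(X 0 ^ (u * p 1 + p u) *
          X 1 ^ ((m + 2 - u) * p 1 + ∑ j ∈ Finset.Icc 2 u, p j)) *
          ((X 0 ^ p u) ^ 0 * (X 1 ^ p u) ^ (a u - 1 - 0)),
        Set.mul_mem_mul (Set.mem_singleton _) ⟨0, Nat.zero_le _, rfl⟩, ?_⟩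
      exact mul_ne_zero
        (mul_ne_zero (pow_ne_zero _ (X_ne_zero _)) (pow_ne_zero _ (X_ne_zero _)))
        (mul_ne_zero (pow_ne_zero _ (pow_ne_zero _ (X_ne_zero _)))
          (pow_ne_zero _ (pow_ne_zero _ (X_ne_zero _))))
  rw [hdeg, hI1, hIi u hu2 hum, mul_pow]
  apply le_antisymm
  · rw [aux_span_pair_pow, aux_span_pair_pow, aux_span_pair_pow,
      Ideal.span_mul_span', Ideal.span_mul_span', Ideal.span_mul_span', Ideal.span_le]
    rintro f hf
    rw [Set.mem_mul] at hf
    obtain ⟨g12, hg12, g34, hg34, rfl⟩ := hf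
    rw [Set.mem_mul] at hg12 hg34
    obtain ⟨g1, ⟨i, hi, rfl⟩, g2, ⟨l, hl, rfl⟩, rfl⟩ := hg12
    obtain ⟨g5, hg5, g6, ⟨n, hn, rfl⟩, rfl⟩ := hg34
    rw [Set.mem_singleton_iff] at hg5; subst hg5
    have hkey := key (K := K) (p 1) (p u) (∑ j ∈ Finset.Icc 2 u, p j) m u (a u) (k - 1)
      l i (n + 1) hum hA1 hl hi (by omega) (by omega)
    simp only [Nat.add_sub_cancel] at hkey
    exact Ideal.subset_span ⟨l, i, n + 1, hl, hi, by omega, by omega, hkey⟩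
  · rw [Ideal.span_le]
    rintro f ⟨s, t, v, hs, ht, hv1, hv, rfl⟩
    rw [← key (K := K) (p 1) (p u) (∑ j ∈ Finset.Icc 2 u, p j) m u (a u) (k - 1)
      s t v hum hA1 hs ht hv1 hv]
    exact Ideal.mul_mem_mul
      (Ideal.mul_mem_mul (mem_span_pair_pow _ _ ht) (mem_span_pair_pow _ _ hs))
      (Ideal.mul_mem_mul (Ideal.subset_span (Set.mem_singleton _))
        (mem_span_pair_pow _ _ (by omega)))
end

section
/- Under the hypotheses of the main construction, for k > 0 and m+1-k < u ≤ m, the ideal I₁^{k-1}(I₁+⋯+I_{u-1}) contains the power of the maximal ideal m^{(k-1)d₁ + d_u}, where m = (x,y), d₁ = (m+2)p₁, and d_u = deg(I_u). -/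
open MvPolynomial

/-!
Both ideals are generated by monomials in `x = X 0`, `y = X 1`, and by the formula for `I u` its
initial degree is `(m + 3) p₁ + p₂ + ⋯ + p_{u-1}`, so it suffices to find, for every monomial
`x^α y^β` of degree `N = (k - 1)(m + 2) p₁ + deg (I u)`, a generator of
`I₁^(k-1) (I₁ + ⋯ + I_{u-1})` dividing it. Write `α = q p₁ + r` with `r < p₁`. The generators of
`I₁^k` have `x`-degree `(e + (m + 1) f) p₁` with `e, f ≤ k`, and each one divides the monomials
whose `α` lies in a window of length `p₁ + p₂ + ⋯ + p_{u-1}` above it. These windows miss only the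
`q = (m + 1) f + (k - 1) + j` with `f ≤ k - 1` and `j ≥ 2`, and for those `j < u`. If `r ≥ p_j`,
the generators of `I₁^(k-1) I_j`, whose `x`-degrees step by `p_j` and `p₁ = (a_j + 1) p_j`, divide
the monomial; if `r < p_j` the last generator of `I₁^(k-1) I_{j-1}` does (of `I₁^k` when `j = 2`).
-/
section SpanPair

variable {R : Type*} [CommRing R] (x y : R)

theorem pow_mul_pow_mem_span_pair_pow {a b n : ℕ} (h : a + b = n) :
    x ^ a * y ^ b ∈ Ideal.span {x, y} ^ n :=
  h ▸ pow_add (Ideal.span {x, y}) a b ▸ Ideal.mul_mem_mul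
    (Ideal.pow_mem_pow (Ideal.subset_span (by simp)) a)
    (Ideal.pow_mem_pow (Ideal.subset_span (by simp)) b)

theorem span_pair_pow_le {J : Ideal R} {n : ℕ}
    (h : ∀ a b, a + b = n → x ^ a * y ^ b ∈ J) : Ideal.span {x, y} ^ n ≤ J := by
  induction n generalizing J with
  | zero => simpa [Ideal.eq_top_iff_one] using h 0 0 rfl
  | succ n ih =>
    have hcolon : Ideal.span {x, y} ^ n ≤ J.colon (Ideal.span {x, y}) := by
      refine ih fun a b hab => Submodule.mem_colon.mpr fun z hz => ?_
      obtain ⟨c, d, rfl⟩ := Ideal.mem_span_pair.mp hz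
      have hx := h (a + 1) b (by omega)
      have hy := h a (b + 1) (by omega)
      rw [smul_eq_mul, show x ^ a * y ^ b * (c * x + d * y)
        = c * (x ^ (a + 1) * y ^ b) + d * (x ^ a * y ^ (b + 1)) by ring]
      exact J.add_mem (J.mul_mem_left c hx) (J.mul_mem_left d hy)
    rw [pow_succ]
    exact Ideal.mul_le.mpr fun r hr s hs => Submodule.mem_colon.mp (hcolon hr) s hs

theorem pow_mul_pow_mem_of_le {J : Ideal R} {a b c d : ℕ} (h : x ^ a * y ^ b ∈ J)
    (hac : a ≤ c) (hbd : b ≤ d) : x ^ c * y ^ d ∈ J := by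
  obtain ⟨c, rfl⟩ := Nat.exists_eq_add_of_le hac
  obtain ⟨d, rfl⟩ := Nat.exists_eq_add_of_le hbd
  rw [show x ^ (a + c) * y ^ (b + d) = x ^ c * y ^ d * (x ^ a * y ^ b) by ring]
  exact J.mul_mem_left _ h

theorem pow_mul_pow_mem_mul {J₁ J₂ : Ideal R} {a₁ b₁ a₂ b₂ : ℕ}
    (h₁ : x ^ a₁ * y ^ b₁ ∈ J₁) (h₂ : x ^ a₂ * y ^ b₂ ∈ J₂) :
    x ^ (a₁ + a₂) * y ^ (b₁ + b₂) ∈ J₁ * J₂ := by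
  rw [show x ^ (a₁ + a₂) * y ^ (b₁ + b₂) = x ^ a₁ * y ^ b₁ * (x ^ a₂ * y ^ b₂) by ring]
  exact Ideal.mul_mem_mul h₁ h₂

theorem pow_mul_pow_mem_span_pow_pair_pow (q : ℕ) {s t n : ℕ} (h : s + t = n) :
    x ^ (s * q) * y ^ (t * q) ∈ Ideal.span {x ^ q, y ^ q} ^ n := by
  simpa only [mul_comm _ q, pow_mul] using pow_mul_pow_mem_span_pair_pow (x ^ q) (y ^ q) h

theorem span_pow_pair_le_span_pair_pow (q : ℕ) :
    Ideal.span {x ^ q, y ^ q} ≤ Ideal.span {x, y} ^ q := by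
  rw [Ideal.span_le, Set.insert_subset_iff, Set.singleton_subset_iff]
  exact ⟨by simpa using pow_mul_pow_mem_span_pair_pow x y (add_zero q),
    by simpa using pow_mul_pow_mem_span_pair_pow x y (zero_add q)⟩

end SpanPair

section InitialDegree

theorem span_X_pair_eq_idealOfVars {R : Type*} [CommSemiring R] :
    Ideal.span {(X 0 : MvPolynomial (Fin 2) R), X 1} = idealOfVars (Fin 2) R := by
  congr 1
  ext f
  simp [Fin.exists_fin_two, eq_comm]

theorem MvPolynomial.IsHomogeneous.le_of_mem_pow_idealOfVars {σ R : Type*} [CommSemiring R]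
    {f : MvPolynomial σ R} {d n : ℕ}
    (hf : f.IsHomogeneous d) (hf0 : f ≠ 0) (hmem : f ∈ idealOfVars σ R ^ n) : n ≤ d := by
  obtain ⟨e, he⟩ := MvPolynomial.support_nonempty.mpr hf0
  have hdeg := (mem_pow_idealOfVars_iff n f).mp hmem e he
  rw [Finsupp.degree_eq_weight_one] at hdeg
  exact hdeg.trans_eq (hf (mem_support_iff.mp he))

theorem idealDeg_eq_of_le_pow {K : Type*} [Field K] {I : Ideal (MvPolynomial (Fin 2) K)} {n : ℕ}
    (hI : I ≤ Ideal.span {X 0, X 1} ^ n) {f : MvPolynomial (Fin 2) K} (hfI : f ∈ I) (hf0 : f ≠ 0)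
    (hf : f.IsHomogeneous n) : idealDeg I = n := by
  refine le_antisymm (Nat.sInf_le ⟨f, hfI, hf0, hf⟩) (le_csInf ⟨n, f, hfI, hf0, hf⟩ ?_)
  rintro d ⟨g, hgI, hg0, hg⟩
  exact hg.le_of_mem_pow_idealOfVars hg0 (span_X_pair_eq_idealOfVars (R := K) ▸ hI hgI)

end InitialDegree

section Construction

variable {R : Type*} [CommRing R] (x y : R)

/- For `x = X 0`, `y = X 1`, `firstIdeal x y m p₁` is the paper's `I₁` and `layerIdeal x y m p a j`
its `I_j`, `2 ≤ j ≤ m`. -/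
def firstIdeal (m P : ℕ) : Ideal R :=
  Ideal.span {x ^ P, y ^ P} * Ideal.span {x ^ ((m + 1) * P), y ^ ((m + 1) * P)}

def layerIdeal (m : ℕ) (p a : ℕ → ℕ) (j : ℕ) : Ideal R :=
  Ideal.span {x ^ (j * p 1 + p j) * y ^ ((m + 2 - j) * p 1 + ∑ l ∈ Finset.Icc 2 j, p l)} *
    Ideal.span {x ^ p j, y ^ p j} ^ (a j - 1)

theorem pow_mul_pow_mem_firstIdeal_pow (m P : ℕ) {n e f : ℕ} (he : e ≤ n) (hf : f ≤ n) :
    x ^ ((e + (m + 1) * f) * P) * y ^ ((n - e + (m + 1) * (n - f)) * P)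
      ∈ firstIdeal x y m P ^ n := by
  have h := pow_mul_pow_mem_mul x y
    (pow_mul_pow_mem_span_pow_pair_pow x y P (Nat.add_sub_cancel' he))
    (pow_mul_pow_mem_span_pow_pair_pow x y ((m + 1) * P) (Nat.add_sub_cancel' hf))
  rw [firstIdeal, mul_pow]
  convert h using 3 <;> ring

theorem pow_mul_pow_mem_layerIdeal {m : ℕ} {p a : ℕ → ℕ} {j s : ℕ} (hs : 1 ≤ s) (hsa : s ≤ a j) :
    x ^ (j * p 1 + s * p j) *
      y ^ ((m + 2 - j) * p 1 + ∑ l ∈ Finset.Icc 2 j, p l + (a j - s) * p j)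
      ∈ layerIdeal x y m p a j := by
  rw [layerIdeal]
  obtain ⟨s, rfl⟩ := Nat.exists_eq_add_of_le' hs
  convert pow_mul_pow_mem_mul x y (Ideal.mem_span_singleton_self _)
    (pow_mul_pow_mem_span_pow_pair_pow x y (p j) (show s + (a j - (s + 1)) = a j - 1 by omega))
    using 3
  ring

variable {m : ℕ} {p a : ℕ → ℕ} {I : ℕ → Ideal R}

theorem pow_mul_pow_mem_pow_mul_sum_of_window_one
    (hI1 : I 1 = firstIdeal x y m (p 1))
    {n u e f α β : ℕ} (hu : 2 ≤ u) (he : e ≤ n + 1) (hf : f ≤ n + 1)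
    (hαβ : α + β = n * ((m + 2) * p 1) + ((m + 3) * p 1 + ∑ l ∈ Finset.Icc 2 (u - 1), p l))
    (hlo : (e + (m + 1) * f) * p 1 ≤ α)
    (hhi : α ≤ (e + (m + 1) * f + 1) * p 1 + ∑ l ∈ Finset.Icc 2 (u - 1), p l) :
    x ^ α * y ^ β ∈ I 1 ^ n * ∑ i ∈ Finset.Icc 1 (u - 1), I i := by
  have hle : I 1 ^ (n + 1) ≤ I 1 ^ n * ∑ i ∈ Finset.Icc 1 (u - 1), I i :=
    pow_succ (I 1) n ▸ Ideal.mul_mono_right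
      (Finset.single_le_sum (fun _ _ => zero_le) (Finset.mem_Icc.mpr ⟨le_rfl, by omega⟩))
  refine hle (pow_mul_pow_mem_of_le x y
    (hI1 ▸ pow_mul_pow_mem_firstIdeal_pow x y m (p 1) he hf) hlo ?_)
  have hdeg : (e + (m + 1) * f + 1) * p 1 + (n + 1 - e + (m + 1) * (n + 1 - f)) * p 1
      = n * ((m + 2) * p 1) + (m + 3) * p 1 := by
    zify [he, hf]
    ring
  omega

theorem pow_mul_pow_mem_pow_mul_sum_of_window_layer
    (hI1 : I 1 = firstIdeal x y m (p 1))
    {j : ℕ} (hIj : I j = layerIdeal x y m p a j)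
    (hpj : p 1 = (a j + 1) * p j) {n u f s α β : ℕ} (hj : j ∈ Finset.Icc 1 (u - 1))
    (hjm : j ≤ m + 2) (hf : f ≤ n) (hs : 1 ≤ s) (hsa : s ≤ a j)
    (hαβ : α + β = n * ((m + 2) * p 1) + ((m + 3) * p 1 + ∑ l ∈ Finset.Icc 2 (u - 1), p l))
    (hlo : (n + (m + 1) * f + j) * p 1 + s * p j ≤ α)
    (hhi : α + ∑ l ∈ Finset.Icc 2 j, p l ≤
      (n + (m + 1) * f + j) * p 1 + (s + 1) * p j + ∑ l ∈ Finset.Icc 2 (u - 1), p l) :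
    x ^ α * y ^ β ∈ I 1 ^ n * ∑ i ∈ Finset.Icc 1 (u - 1), I i := by
  have hle : I 1 ^ n * I j ≤ I 1 ^ n * ∑ i ∈ Finset.Icc 1 (u - 1), I i :=
    Ideal.mul_mono_right (Finset.single_le_sum (fun _ _ => zero_le) hj)
  refine hle (pow_mul_pow_mem_of_le x y (pow_mul_pow_mem_mul x y
    (hI1 ▸ pow_mul_pow_mem_firstIdeal_pow x y m (p 1) le_rfl hf)
    (hIj ▸ pow_mul_pow_mem_layerIdeal x y hs hsa))
    (by linarith) ?_)
  rw [Nat.sub_self, zero_add]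
  have hdeg : (n + (m + 1) * f + j) * p 1 + (s + 1) * p j
      + ((m + 1) * (n - f) * p 1 + ((m + 2 - j) * p 1 + (a j - s) * p j))
      = n * ((m + 2) * p 1) + (m + 3) * p 1 := by
    have hpjz : (p 1 : ℤ) = (a j + 1) * p j := by exact_mod_cast hpj
    zify [hf, hjm, hsa]
    linear_combination -hpjz
  omega

theorem pow_mul_pow_mem_pow_mul_sum_of_gap
    (hI1 : I 1 = firstIdeal x y m (p 1))
    (hIi : ∀ i, 2 ≤ i → i ≤ m → I i = layerIdeal x y m p a i)
    (hp : ∀ i, 2 ≤ i → i ≤ m → 2 ≤ p i) (ha : ∀ i, 2 ≤ i → i ≤ m → 2 ≤ a i)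
    (hpa : ∀ i, 2 ≤ i → i ≤ m → p 1 = (a i + 1) * p i)
    {n u f j r α β : ℕ} (hum : u ≤ m) (hf : f ≤ n) (hj2 : 2 ≤ j) (hju : j < u) (hr : r < p 1)
    (hα : α = (n + (m + 1) * f + j) * p 1 + r)
    (hαβ : α + β = n * ((m + 2) * p 1) + ((m + 3) * p 1 + ∑ l ∈ Finset.Icc 2 (u - 1), p l)) :
    x ^ α * y ^ β ∈ I 1 ^ n * ∑ i ∈ Finset.Icc 1 (u - 1), I i := by
  have hSj : ∑ l ∈ Finset.Icc 2 j, p l ≤ ∑ l ∈ Finset.Icc 2 (u - 1), p l :=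
    Finset.sum_le_sum_of_subset (Finset.Icc_subset_Icc_right (by omega))
  rcases le_or_gt (p j) r with hjr | hrj
  · have hpj := hpa j hj2 (by omega)
    have hpos : 0 < p j := by have := hp j hj2 (by omega); omega
    have hdiv := Nat.div_mul_le_self r (p j)
    have hmod := Nat.lt_div_mul_add (a := r) hpos
    refine pow_mul_pow_mem_pow_mul_sum_of_window_layer x y hI1 (hIi j hj2 (by omega)) hpj
      (Finset.mem_Icc.mpr ⟨by omega, by omega⟩) (by omega) hf
      ((Nat.one_le_div_iff hpos).mpr hjr) ?_ hαβ (by linarith) (by linarith)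
    exact Nat.lt_succ_iff.mp ((Nat.div_lt_iff_lt_mul hpos).mpr (hpj ▸ hr))
  rcases eq_or_lt_of_le hj2 with rfl | hj3
  · have hp2 : ∑ l ∈ Finset.Icc 2 2, p l = p 2 := by simp
    exact pow_mul_pow_mem_pow_mul_sum_of_window_one x y hI1 (e := n + 1) (f := f) (by omega)
      le_rfl (by omega) hαβ (by linarith) (by linarith)
  obtain ⟨i, rfl⟩ : ∃ i, j = i + 1 := ⟨j - 1, by omega⟩
  have hS : ∑ l ∈ Finset.Icc 2 (i + 1), p l = ∑ l ∈ Finset.Icc 2 i, p l + p (i + 1) :=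
    Finset.sum_Icc_succ_top (by omega) p
  have hpi := hpa i (by omega) (by omega)
  exact pow_mul_pow_mem_pow_mul_sum_of_window_layer x y hI1 (hIi i (by omega) (by omega)) hpi
    (Finset.mem_Icc.mpr ⟨by omega, by omega⟩) (by omega) hf
    (by linarith [ha i (by omega) (by omega)]) le_rfl hαβ (by linarith) (by linarith)

theorem pow_mul_pow_mem_pow_mul_sum
    (hI1 : I 1 = firstIdeal x y m (p 1))
    (hIi : ∀ i, 2 ≤ i → i ≤ m → I i = layerIdeal x y m p a i)
    (hp1 : 2 ≤ p 1) (hp : ∀ i, 2 ≤ i → i ≤ m → 2 ≤ p i) (ha : ∀ i, 2 ≤ i → i ≤ m → 2 ≤ a i)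
    (hpa : ∀ i, 2 ≤ i → i ≤ m → p 1 = (a i + 1) * p i)
    {n u α β : ℕ} (hu : 2 ≤ u) (hum : u ≤ m) (hmu : m < u + n)
    (hαβ : α + β = n * ((m + 2) * p 1) + ((m + 3) * p 1 + ∑ l ∈ Finset.Icc 2 (u - 1), p l)) :
    x ^ α * y ^ β ∈ I 1 ^ n * ∑ i ∈ Finset.Icc 1 (u - 1), I i := by
  obtain ⟨q, r, hr, rfl⟩ : ∃ q r, r < p 1 ∧ α = q * p 1 + r :=
    ⟨α / p 1, α % p 1, Nat.mod_lt _ (by omega), (Nat.div_add_mod' α (p 1)).symm⟩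
  have hσ := Nat.zero_le (∑ l ∈ Finset.Icc 2 (u - 1), p l)
  rcases lt_or_ge q ((m + 1) * (n + 1)) with hq | hq
  · obtain ⟨f, e, he, rfl⟩ : ∃ f e, e < m + 1 ∧ q = e + (m + 1) * f :=
      ⟨q / (m + 1), q % (m + 1), Nat.mod_lt _ (by omega), (Nat.mod_add_div q (m + 1)).symm⟩
    have hf : f ≤ n := by by_contra! hf; nlinarith
    rcases le_or_gt e (n + 1) with hen | hen
    · exact pow_mul_pow_mem_pow_mul_sum_of_window_one x y hI1 (f := f) hu hen (by omega) hαβ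
        (by omega) (by linarith)
    · obtain ⟨j, rfl⟩ : ∃ j, e = n + j := ⟨e - n, by omega⟩
      exact pow_mul_pow_mem_pow_mul_sum_of_gap x y hI1 hIi hp ha hpa (j := j) hum hf
        (by omega) (by omega) hr (by ring) hαβ
  · obtain ⟨e, rfl⟩ := Nat.exists_eq_add_of_le hq
    rcases le_or_gt e (n + 1) with hen | hen
    · exact pow_mul_pow_mem_pow_mul_sum_of_window_one x y hI1 (f := n + 1) hu hen le_rfl hαβ
        (by linarith) (by linarith)
    · have := Nat.mul_le_mul_right (p 1) hen.le
      exact pow_mul_pow_mem_pow_mul_sum_of_window_one x y hI1 hu le_rfl le_rfl hαβ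
        (by linarith) (by linarith)

end Construction

theorem idealDeg_layerIdeal {K : Type*} [Field K] {m u : ℕ} {p a : ℕ → ℕ}
    (hpu : p 1 = (a u + 1) * p u) (hau : 1 ≤ a u) (hu : 2 ≤ u) (hum : u ≤ m + 2) :
    idealDeg (layerIdeal (X 0 : MvPolynomial (Fin 2) K) (X 1) m p a u)
      = (m + 3) * p 1 + ∑ l ∈ Finset.Icc 2 (u - 1), p l := by
  obtain ⟨v, rfl⟩ : ∃ v, u = v + 1 := ⟨u - 1, by omega⟩
  have hS : ∑ l ∈ Finset.Icc 2 (v + 1), p l = ∑ l ∈ Finset.Icc 2 v, p l + p (v + 1) :=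
    Finset.sum_Icc_succ_top (by omega) p
  have hpuz : (p 1 : ℤ) = (a (v + 1) + 1) * p (v + 1) := by exact_mod_cast hpu
  rw [Nat.add_sub_cancel]
  have hgen : (v + 1) * p 1 + a (v + 1) * p (v + 1) + ((m + 2 - (v + 1)) * p 1
      + ∑ l ∈ Finset.Icc 2 (v + 1), p l + (a (v + 1) - a (v + 1)) * p (v + 1))
      = (m + 3) * p 1 + ∑ l ∈ Finset.Icc 2 v, p l := by
    rw [Nat.sub_self, zero_mul, add_zero, hS]
    zify [hum]
    linear_combination -hpuz
  refine idealDeg_eq_of_le_pow ?_ (pow_mul_pow_mem_layerIdeal _ _ hau le_rfl)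
    (mul_ne_zero (pow_ne_zero _ (X_ne_zero _)) (pow_ne_zero _ (X_ne_zero _)))
    (hgen ▸ (isHomogeneous_X_pow 0 _).mul (isHomogeneous_X_pow 1 _))
  refine (Ideal.mul_mono (Ideal.span_le.mpr (Set.singleton_subset_iff.mpr
    (pow_mul_pow_mem_span_pair_pow _ _ rfl)))
    (Ideal.pow_right_mono (span_pow_pair_le_span_pair_pow _ _ _) _)).trans ?_
  rw [← pow_mul, ← pow_add]
  refine Ideal.pow_le_pow_right (le_of_eq ?_)
  rw [hS]
  zify [hum, hau]
  linear_combination hpuz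

theorem stmt13_general (K : Type*) [Field K] (m : ℕ) (p a : ℕ → ℕ)
    (hp1 : 2 ≤ p 1) (hp : ∀ i, 2 ≤ i → i ≤ m → 2 ≤ p i)
    (ha : ∀ i, 2 ≤ i → i ≤ m → 2 ≤ a i)
    (hpa : ∀ i, 2 ≤ i → i ≤ m → p 1 = (a i + 1) * p i)
    (I : ℕ → Ideal (MvPolynomial (Fin 2) K))
    (hI1 : I 1 = Ideal.span {X 0 ^ p 1, X 1 ^ p 1} *
        Ideal.span {X 0 ^ ((m + 1) * p 1), X 1 ^ ((m + 1) * p 1)})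
    (hIi : ∀ i, 2 ≤ i → i ≤ m → I i =
        Ideal.span {X 0 ^ (i * p 1 + p i) *
            X 1 ^ ((m + 2 - i) * p 1 + ∑ j ∈ Finset.Icc 2 i, p j)} *
          Ideal.span {X 0 ^ p i, X 1 ^ p i} ^ (a i - 1)) :
    ∀ k, 0 < k → ∀ u, 2 ≤ u → u ≤ m → m + 1 - k < u →
      Ideal.span {(X 0 : MvPolynomial (Fin 2) K), X 1} ^
          ((k - 1) * ((m + 2) * p 1) + idealDeg (I u)) ≤
        I 1 ^ (k - 1) * ∑ i ∈ Finset.Icc 1 (u - 1), I i := by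
  intro k _ u hu hum hmku
  obtain ⟨n, rfl⟩ : ∃ n, k = n + 1 := ⟨k - 1, by omega⟩
  rw [Nat.add_sub_cancel, show I u = layerIdeal (X 0) (X 1) m p a u from hIi u hu hum,
    idealDeg_layerIdeal (hpa u hu hum) (by linarith [ha u hu hum]) hu (by omega)]
  exact span_pair_pow_le _ _ fun α β hαβ =>
    pow_mul_pow_mem_pow_mul_sum _ _ hI1 hIi hp1 hp ha hpa hu hum (by omega) hαβ

theorem stmt13 (K : Type*) [Field K] (m : ℕ) (hm : 2 ≤ m) (p a : ℕ → ℕ)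
    (hp1 : 2 ≤ p 1) (hp : ∀ i, 2 ≤ i → i ≤ m → 2 ≤ p i)
    (ha : ∀ i, 2 ≤ i → i ≤ m → 2 ≤ a i)
    (hpa : ∀ i, 2 ≤ i → i ≤ m → p 1 = (a i + 1) * p i)
    (hsum : ∑ j ∈ Finset.Icc 2 (m - 1), p j < p 1)
    (I : ℕ → Ideal (MvPolynomial (Fin 2) K))
    (hI1 : I 1 = Ideal.span {X 0 ^ p 1, X 1 ^ p 1} *
        Ideal.span {X 0 ^ ((m + 1) * p 1), X 1 ^ ((m + 1) * p 1)})
    (hIi : ∀ i, 2 ≤ i → i ≤ m → I i =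
        Ideal.span {X 0 ^ (i * p 1 + p i) *
            X 1 ^ ((m + 2 - i) * p 1 + ∑ j ∈ Finset.Icc 2 i, p j)} *
          Ideal.span {X 0 ^ p i, X 1 ^ p i} ^ (a i - 1)) :
    ∀ k, 0 < k → ∀ u, 2 ≤ u → u ≤ m → m + 1 - k < u →
      Ideal.span {(X 0 : MvPolynomial (Fin 2) K), X 1} ^
          ((k - 1) * ((m + 2) * p 1) + idealDeg (I u)) ≤
        I 1 ^ (k - 1) * ∑ i ∈ Finset.Icc 1 (u - 1), I i :=
  stmt13_general K m p a hp1 hp ha hpa I hI1 hIi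
end

section
/- Let I be the ideal of K[x,y] given by I = I₁+I₂+I₃+I₄+I₅ where I₁ = (x^{72},y^{72})(x^{432},y^{432}), I₂ = x^{162}y^{378}(x^{18},y^{18})², I₃ = x^{228}y^{318}(x^{12},y^{12})⁴, I₄ = x^{296}y^{254}(x^8,y^8)⁷, and I₅ = x^{362}y^{184}(x²,y²)^{34}. Then μ(I) = 55, μ(I²) = 41, μ(I³) = 40, μ(I⁴) = 37, μ(I⁵) = 36, and μ(I⁶) = 43. -/
open MvPolynomial

namespace S17

open Pointwise

variable (K : Type*) [Field K]

abbrev Rg (K : Type*) [Field K] := MvPolynomial (Fin 2) K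

noncomputable def e (p : ℕ × ℕ) : Fin 2 →₀ ℕ := Finsupp.single 0 p.1 + Finsupp.single 1 p.2

lemma e_apply0 (p : ℕ × ℕ) : e p 0 = p.1 := by simp [e]
lemma e_apply1 (p : ℕ × ℕ) : e p 1 = p.2 := by simp [e]

lemma e_le_iff {p q : ℕ × ℕ} : e p ≤ e q ↔ p.1 ≤ q.1 ∧ p.2 ≤ q.2 := by
  rw [Finsupp.le_def]
  constructor
  · intro h
    exact ⟨by simpa [e_apply0] using h 0, by simpa [e_apply1] using h 1⟩
  · rintro ⟨h1, h2⟩ i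
    fin_cases i
    · simpa [e_apply0] using h1
    · simpa [e_apply1] using h2

lemma e_inj : Function.Injective e := by
  intro p q h
  have h1 := e_le_iff.mp h.le
  have h2 := e_le_iff.mp h.ge
  exact Prod.ext (le_antisymm h1.1 h2.1) (le_antisymm h1.2 h2.2)

lemma e_add (p q : ℕ × ℕ) : e (p + q) = e p + e q := by
  simp only [e, Prod.fst_add, Prod.snd_add, Finsupp.single_add]
  abel

noncomputable def mono (p : ℕ × ℕ) : Rg K := monomial (e p) 1

lemma mono_mul (p q : ℕ × ℕ) : mono K p * mono K q = mono K (p + q) := by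
  simp [mono, monomial_mul, e_add]

lemma mono_eq (a b : ℕ) : mono K (a, b) = X 0 ^ a * X 1 ^ b := by
  rw [X_pow_eq_monomial, X_pow_eq_monomial, monomial_mul, mul_one]; rfl

lemma mono_zero : mono K (0, 0) = 1 := by
  have : e (0, 0) = 0 := by simp [e]
  rw [mono, this, monomial_zero', C_1]

lemma mono_inj : Function.Injective (mono K) := fun p q h =>
  e_inj (monomial_left_injective one_ne_zero h)

def mE (A : Finset (ℕ × ℕ)) : Set (Rg K) := mono K '' ↑A

lemma mono_factor {p q : ℕ × ℕ} (h1 : q.1 ≤ p.1) (h2 : q.2 ≤ p.2) :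
    mono K (p - q) * mono K q = mono K p := by
  rw [mono_mul]
  congr 1
  obtain ⟨p1, p2⟩ := p
  obtain ⟨q1, q2⟩ := q
  simp only [Prod.mk_sub_mk, Prod.mk_add_mk, Prod.mk.injEq]
  simp only at h1 h2
  omega

lemma mem_span_mE {A : Finset (ℕ × ℕ)} {p : ℕ × ℕ}
    (h : ∃ q ∈ A, q.1 ≤ p.1 ∧ q.2 ≤ p.2) :
    mono K p ∈ Ideal.span (mE K A) := by
  obtain ⟨q, hq, h1, h2⟩ := h
  rw [← mono_factor K h1 h2]
  exact Ideal.mul_mem_left _ _ (Ideal.subset_span ⟨q, hq, rfl⟩)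

lemma span_mE_le {A B : Finset (ℕ × ℕ)}
    (h : ∀ p ∈ A, ∃ q ∈ B, q.1 ≤ p.1 ∧ q.2 ≤ p.2) :
    Ideal.span (mE K A) ≤ Ideal.span (mE K B) := by
  rw [Ideal.span_le]
  rintro x ⟨p, hp, rfl⟩
  exact mem_span_mE K (h p hp)

lemma span_mE_mul (A B : Finset (ℕ × ℕ)) :
    Ideal.span (mE K A) * Ideal.span (mE K B) = Ideal.span (mE K (A + B)) := by
  rw [Ideal.span_mul_span']
  congr 1
  ext x
  constructor
  · rintro ⟨u, ⟨p, hp, rfl⟩, v, ⟨q, hq, rfl⟩, rfl⟩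
    exact ⟨p + q, Finset.add_mem_add hp hq, (mono_mul K p q).symm⟩
  · rintro ⟨r, hr, rfl⟩
    rw [Finset.mem_coe, Finset.mem_add] at hr
    obtain ⟨p, hp, q, hq, rfl⟩ := hr
    exact ⟨mono K p, ⟨p, hp, rfl⟩, mono K q, ⟨q, hq, rfl⟩, mono_mul K p q⟩

def spow (A : Finset (ℕ × ℕ)) : ℕ → Finset (ℕ × ℕ)
  | 0 => {(0, 0)}
  | n + 1 => spow A n + A

lemma span_mE_pow (A : Finset (ℕ × ℕ)) (n : ℕ) :
    Ideal.span (mE K A) ^ n = Ideal.span (mE K (spow A n)) := by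
  induction n with
  | zero =>
      rw [pow_zero, Ideal.one_eq_top]
      have : mE K (spow A 0) = {1} := by
        simp [mE, spow, ← mono_zero (K := K)]
      rw [this, Ideal.span_singleton_one]
  | succ n ih =>
      rw [pow_succ, ih, span_mE_mul]
      rfl

lemma span_mE_sup (A B : Finset (ℕ × ℕ)) :
    Ideal.span (mE K A) ⊔ Ideal.span (mE K B) = Ideal.span (mE K (A ∪ B)) := by
  rw [← Ideal.span_union]
  congr 1
  simp [mE, Finset.coe_union, Set.image_union]

lemma mul_le_span (A B C : Finset (ℕ × ℕ))
    (h : ∀ a ∈ A, ∀ b ∈ B, ∃ c ∈ C, c.1 ≤ a.1 + b.1 ∧ c.2 ≤ a.2 + b.2) :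
    Ideal.span (mE K A) * Ideal.span (mE K B) ≤ Ideal.span (mE K C) := by
  rw [Ideal.span_mul_span', Ideal.span_le]
  rintro x hx
  rw [Set.mem_mul] at hx
  obtain ⟨u, ⟨a, ha, rfl⟩, v, ⟨b, hb, rfl⟩, rfl⟩ := hx
  rw [SetLike.mem_coe, mono_mul]
  obtain ⟨c, hc, h1, h2⟩ := h a ha b hb
  exact mem_span_mE K ⟨c, hc, by simpa using h1, by simpa using h2⟩

lemma span_le_mul (A B C : Finset (ℕ × ℕ))
    (h : ∀ c ∈ C, ∃ a ∈ A, ∃ b ∈ B, a.1 + b.1 ≤ c.1 ∧ a.2 + b.2 ≤ c.2) :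
    Ideal.span (mE K C) ≤ Ideal.span (mE K A) * Ideal.span (mE K B) := by
  rw [Ideal.span_le]
  rintro x ⟨c, hc, rfl⟩
  obtain ⟨a, ha, b, hb, h1, h2⟩ := h c hc
  rw [SetLike.mem_coe, ← mono_factor K (p := c) (q := a + b) (by simpa using h1) (by simpa using h2),
    ← mono_mul]
  exact Ideal.mul_mem_left _ _
    (Ideal.mul_mem_mul (Ideal.subset_span ⟨a, ha, rfl⟩) (Ideal.subset_span ⟨b, hb, rfl⟩))

end S17
namespace S17

variable (K : Type*) [Field K]

lemma exists_le_of_mem_span {G : Finset (ℕ × ℕ)} {f : Rg K}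
    (hf : f ∈ Ideal.span (mE K G)) :
    ∀ d, coeff d f ≠ 0 → ∃ p ∈ G, e p ≤ d := by
  refine Submodule.span_induction ?_ ?_ ?_ ?_ hf
  · rintro x ⟨p, hp, rfl⟩ d hd
    rcases eq_or_ne (e p) d with h | h
    · exact ⟨p, hp, h.le⟩
    · rw [mono, coeff_monomial, if_neg h] at hd
      exact absurd rfl hd
  · intro d hd
    simp at hd
  · intro x y _ _ ihx ihy d hd
    rw [coeff_add] at hd
    by_cases hx0 : coeff d x = 0
    · exact ihy d (by intro h; rw [hx0, h, add_zero] at hd; exact hd rfl)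
    · exact ihx d hx0
  · intro a x _ ih d hd
    rw [smul_eq_mul, coeff_mul] at hd
    obtain ⟨b, hb, hb0⟩ := Finset.exists_ne_zero_of_sum_ne_zero hd
    obtain ⟨p, hp, hle⟩ := ih b.2 (right_ne_zero_of_mul hb0)
    refine ⟨p, hp, hle.trans ?_⟩
    rw [← Finset.HasAntidiagonal.mem_antidiagonal.mp hb]
    exact le_add_self

noncomputable def pr (G : Finset (ℕ × ℕ)) : Rg K →ₗ[K] (↥G → K) :=
  LinearMap.pi fun g => lcoeff K (e g.1)

lemma pr_apply (G : Finset (ℕ × ℕ)) (f : Rg K) (g : ↥G) :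
    pr K G f g = coeff (e g.1) f := rfl

lemma key {G : Finset (ℕ × ℕ)}
    (hA : ∀ p ∈ G, ∀ q ∈ G, p.1 ≤ q.1 → p.2 ≤ q.2 → p = q)
    {s : Finset (Rg K)} (hsub : ∀ x ∈ s, x ∈ Ideal.span (mE K G))
    {f : Rg K} (hf : f ∈ Ideal.span ((s : Set (Rg K)))) :
    pr K G f ∈ Submodule.span K (pr K G '' ↑s) := by
  have H : ∀ c : Rg K, pr K G (c * f) ∈ Submodule.span K (pr K G '' ↑s) := by
    refine Submodule.span_induction
      (p := fun x _ => ∀ c : Rg K, pr K G (c * x) ∈ Submodule.span K (pr K G '' ↑s))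
      ?_ ?_ ?_ ?_ hf
    · intro x hxs c
      have hx : x ∈ Ideal.span (mE K G) := hsub x hxs
      have hkey : pr K G (c * x) = coeff 0 c • pr K G x := by
        funext g
        show coeff (e g.1) (c * x) = coeff 0 c * coeff (e g.1) x
        rw [coeff_mul]
        refine Finset.sum_eq_single (0, e g.1) ?_ ?_
        · rintro b hb hbne
          rcases eq_or_ne (coeff b.2 x) 0 with h0 | h0
          · rw [h0, mul_zero]
          · exfalso
            obtain ⟨p, hp, hple⟩ := exists_le_of_mem_span K hx b.2 h0
            have hsum : b.1 + b.2 = e g.1 := Finset.HasAntidiagonal.mem_antidiagonal.mp hb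
            have hb2 : b.2 ≤ e g.1 := hsum ▸ le_add_self
            have hpg : p = g.1 := by
              have h' := e_le_iff.mp (hple.trans hb2)
              exact hA p hp g.1 g.2 h'.1 h'.2
            have hb2' : b.2 = e g.1 := le_antisymm hb2 (hpg ▸ hple)
            have hb1 : b.1 = 0 := by
              have h'' := hsum
              rw [hb2'] at h''
              simpa using h''
            exact hbne (Prod.ext hb1 hb2')
        · intro h
          exact absurd (Finset.HasAntidiagonal.mem_antidiagonal.mpr (zero_add _)) h
      rw [hkey]
      exact Submodule.smul_mem _ _ (Submodule.subset_span ⟨x, hxs, rfl⟩)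
    · intro c
      rw [mul_zero, map_zero]
      exact zero_mem _
    · intro x y _ _ ihx ihy c
      rw [mul_add, map_add]
      exact add_mem (ihx c) (ihy c)
    · intro a x _ ih c
      rw [smul_eq_mul, ← mul_assoc]
      exact ih (c * a)
  simpa using H 1

lemma card_le {G : Finset (ℕ × ℕ)}
    (hA : ∀ p ∈ G, ∀ q ∈ G, p.1 ≤ q.1 → p.2 ≤ q.2 → p = q)
    {s : Finset (Rg K)} (hs : Ideal.span ((s : Set (Rg K))) = Ideal.span (mE K G)) :
    G.card ≤ s.card := by
  classical
  have hsub : ∀ x ∈ s, x ∈ Ideal.span (mE K G) := by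
    intro x hx
    rw [← hs]
    exact Ideal.subset_span hx
  have htop : Submodule.span K (pr K G '' ↑s) = ⊤ := by
    rw [eq_top_iff, ← (Pi.basisFun K ↥G).span_eq, Submodule.span_le]
    rintro _ ⟨g, rfl⟩
    have h1 : pr K G (mono K g.1) = (Pi.basisFun K ↥G) g := by
      funext g'
      show coeff (e g'.1) (monomial (e g.1) (1 : K)) = _
      rw [Pi.basisFun_apply, coeff_monomial, Pi.single_apply]
      congr 1
      simp only [eq_iff_iff]
      constructor
      · intro h
        exact Subtype.ext (e_inj h).symm
      · rintro rfl
        rfl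
    rw [← h1]
    refine SetLike.mem_coe.mpr (key K hA hsub ?_)
    rw [hs]
    exact Ideal.subset_span ⟨g.1, g.2, rfl⟩
  calc G.card = Fintype.card ↥G := (Fintype.card_coe G).symm
    _ = Module.finrank K (↥G → K) := (Module.finrank_fintype_fun_eq_card K).symm
    _ = Module.finrank K ↥(⊤ : Submodule K (↥G → K)) := (finrank_top K _).symm
    _ = Module.finrank K ↥(Submodule.span K (pr K G '' ↑s)) := by rw [htop]
    _ ≤ (s.image (pr K G)).card := by
        have := finrank_span_finset_le_card (R := K) (s.image (pr K G))
        rw [Set.finrank, Finset.coe_image] at this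
        exact this
    _ ≤ s.card := Finset.card_image_le

theorem mu_span_mE (G : Finset (ℕ × ℕ))
    (hA : ∀ p ∈ G, ∀ q ∈ G, p.1 ≤ q.1 → p.2 ≤ q.2 → p = q) :
    mu (Ideal.span (mE K G)) = G.card := by
  classical
  have hmem : G.card ∈ {n | ∃ s : Finset (Rg K), s.card = n ∧
      Ideal.span ((s : Set (Rg K))) = Ideal.span (mE K G)} := by
    refine ⟨G.image (mono K), Finset.card_image_of_injective _ (mono_inj K), ?_⟩
    rw [Finset.coe_image]
    rfl
  refine le_antisymm (Nat.sInf_le hmem) (le_csInf ⟨_, hmem⟩ ?_)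
  rintro n ⟨s, rfl, hsp⟩
  exact card_le K hA hsp

end S17
namespace S17
open Pointwise
def S : Finset (ℕ × ℕ) :=
  {(0,504), (72,432), (162,414), (180,396), (198,378), (228,366), (240,354), (252,342), (264,330), (276,318), (296,310), (304,302), (312,294), (320,286), (328,278), (336,270), (344,262), (352,254), (362,252), (364,250), (366,248), (368,246), (370,244), (372,242), (374,240), (376,238), (378,236), (380,234), (382,232), (384,230), (386,228), (388,226), (390,224), (392,222), (394,220), (396,218), (398,216), (400,214), (402,212), (404,210), (406,208), (408,206), (410,204), (412,202), (414,200), (416,198), (418,196), (420,194), (422,192), (424,190), (426,188), (428,186), (430,184), (432,72), (504,0)}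

def G2 : Finset (ℕ × ℕ) :=
  {(0,1008), (72,936), (144,864), (234,846), (252,828), (270,810), (300,798), (312,786), (324,774), (336,762), (348,750), (368,742), (376,734), (384,726), (392,718), (400,710), (408,702), (416,694), (424,686), (432,576), (504,504), (576,432), (666,414), (684,396), (702,378), (732,366), (744,354), (756,342), (768,330), (780,318), (800,310), (808,302), (816,294), (824,286), (832,278), (840,270), (848,262), (856,254), (864,144), (936,72), (1008,0)}

def G3 : Finset (ℕ × ℕ) :=
  {(0,1512), (72,1440), (144,1368), (216,1296), (306,1278), (324,1260), (342,1242), (372,1230), (384,1218), (396,1206), (408,1194), (420,1182), (432,1080), (504,1008), (576,936), (648,864), (738,846), (756,828), (774,810), (804,798), (816,786), (828,774), (840,762), (852,750), (864,648), (936,576), (1008,504), (1080,432), (1170,414), (1188,396), (1206,378), (1236,366), (1248,354), (1260,342), (1272,330), (1284,318), (1296,216), (1368,144), (1440,72), (1512,0)}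

def G4 : Finset (ℕ × ℕ) :=
  {(0,2016), (72,1944), (144,1872), (216,1800), (288,1728), (378,1710), (396,1692), (414,1674), (432,1584), (504,1512), (576,1440), (648,1368), (720,1296), (810,1278), (828,1260), (846,1242), (864,1152), (936,1080), (1008,1008), (1080,936), (1152,864), (1242,846), (1260,828), (1278,810), (1296,720), (1368,648), (1440,576), (1512,504), (1584,432), (1674,414), (1692,396), (1710,378), (1728,288), (1800,216), (1872,144), (1944,72), (2016,0)}

def G5 : Finset (ℕ × ℕ) :=
  {(0,2520), (72,2448), (144,2376), (216,2304), (288,2232), (360,2160), (432,2088), (504,2016), (576,1944), (648,1872), (720,1800), (792,1728), (864,1656), (936,1584), (1008,1512), (1080,1440), (1152,1368), (1224,1296), (1296,1224), (1368,1152), (1440,1080), (1512,1008), (1584,936), (1656,864), (1728,792), (1800,720), (1872,648), (1944,576), (2016,504), (2088,432), (2160,360), (2232,288), (2304,216), (2376,144), (2448,72), (2520,0)}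

def G6 : Finset (ℕ × ℕ) :=
  {(0,3024), (72,2952), (144,2880), (216,2808), (288,2736), (360,2664), (432,2592), (504,2520), (576,2448), (648,2376), (720,2304), (792,2232), (864,2160), (936,2088), (1008,2016), (1080,1944), (1152,1872), (1224,1800), (1296,1728), (1368,1656), (1440,1584), (1512,1512), (1584,1440), (1656,1368), (1728,1296), (1800,1224), (1872,1152), (1944,1080), (2016,1008), (2088,936), (2160,864), (2232,792), (2304,720), (2376,648), (2448,576), (2520,504), (2592,432), (2664,360), (2736,288), (2808,216), (2880,144), (2952,72), (3024,0)}

end S17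
namespace S17
open Pointwise

set_option maxRecDepth 1000000
set_option maxHeartbeats 4000000

lemma hSdomA : ∀ p ∈ (({(72,0),(0,72)} : Finset (ℕ × ℕ)) + {(432,0),(0,432)}) ∪
    (({(162,378)} : Finset (ℕ × ℕ)) + spow {(18,0),(0,18)} 2) ∪
    (({(228,318)} : Finset (ℕ × ℕ)) + spow {(12,0),(0,12)} 4) ∪
    (({(296,254)} : Finset (ℕ × ℕ)) + spow {(8,0),(0,8)} 7) ∪
    (({(362,184)} : Finset (ℕ × ℕ)) + spow {(2,0),(0,2)} 34),
    ∃ q ∈ S, q.1 ≤ p.1 ∧ q.2 ≤ p.2 := by decide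

lemma hSdomB : ∀ p ∈ S, ∃ q ∈ (({(72,0),(0,72)} : Finset (ℕ × ℕ)) + {(432,0),(0,432)}) ∪
    (({(162,378)} : Finset (ℕ × ℕ)) + spow {(18,0),(0,18)} 2) ∪
    (({(228,318)} : Finset (ℕ × ℕ)) + spow {(12,0),(0,12)} 4) ∪
    (({(296,254)} : Finset (ℕ × ℕ)) + spow {(8,0),(0,8)} 7) ∪
    (({(362,184)} : Finset (ℕ × ℕ)) + spow {(2,0),(0,2)} 34),
    q.1 ≤ p.1 ∧ q.2 ≤ p.2 := by decide

lemma d2a : ∀ a ∈ S, ∀ b ∈ S, ∃ c ∈ G2, c.1 ≤ a.1 + b.1 ∧ c.2 ≤ a.2 + b.2 := by decide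
lemma d2b : ∀ c ∈ G2, ∃ a ∈ S, ∃ b ∈ S, a.1 + b.1 ≤ c.1 ∧ a.2 + b.2 ≤ c.2 := by decide
lemma d3a : ∀ a ∈ G2, ∀ b ∈ S, ∃ c ∈ G3, c.1 ≤ a.1 + b.1 ∧ c.2 ≤ a.2 + b.2 := by decide
lemma d3b : ∀ c ∈ G3, ∃ a ∈ G2, ∃ b ∈ S, a.1 + b.1 ≤ c.1 ∧ a.2 + b.2 ≤ c.2 := by decide
lemma d4a : ∀ a ∈ G3, ∀ b ∈ S, ∃ c ∈ G4, c.1 ≤ a.1 + b.1 ∧ c.2 ≤ a.2 + b.2 := by decide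
lemma d4b : ∀ c ∈ G4, ∃ a ∈ G3, ∃ b ∈ S, a.1 + b.1 ≤ c.1 ∧ a.2 + b.2 ≤ c.2 := by decide
lemma d5a : ∀ a ∈ G4, ∀ b ∈ S, ∃ c ∈ G5, c.1 ≤ a.1 + b.1 ∧ c.2 ≤ a.2 + b.2 := by decide
lemma d5b : ∀ c ∈ G5, ∃ a ∈ G4, ∃ b ∈ S, a.1 + b.1 ≤ c.1 ∧ a.2 + b.2 ≤ c.2 := by decide
lemma d6a : ∀ a ∈ G5, ∀ b ∈ S, ∃ c ∈ G6, c.1 ≤ a.1 + b.1 ∧ c.2 ≤ a.2 + b.2 := by decide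
lemma d6b : ∀ c ∈ G6, ∃ a ∈ G5, ∃ b ∈ S, a.1 + b.1 ≤ c.1 ∧ a.2 + b.2 ≤ c.2 := by decide

lemma antS : ∀ p ∈ S, ∀ q ∈ S, p.1 ≤ q.1 → p.2 ≤ q.2 → p = q := by decide
lemma antG2 : ∀ p ∈ G2, ∀ q ∈ G2, p.1 ≤ q.1 → p.2 ≤ q.2 → p = q := by decide
lemma antG3 : ∀ p ∈ G3, ∀ q ∈ G3, p.1 ≤ q.1 → p.2 ≤ q.2 → p = q := by decide
lemma antG4 : ∀ p ∈ G4, ∀ q ∈ G4, p.1 ≤ q.1 → p.2 ≤ q.2 → p = q := by decide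
lemma antG5 : ∀ p ∈ G5, ∀ q ∈ G5, p.1 ≤ q.1 → p.2 ≤ q.2 → p = q := by decide
lemma antG6 : ∀ p ∈ G6, ∀ q ∈ G6, p.1 ≤ q.1 → p.2 ≤ q.2 → p = q := by decide

lemma cardS : S.card = 55 := by decide
lemma cardG2 : G2.card = 41 := by decide
lemma cardG3 : G3.card = 40 := by decide
lemma cardG4 : G4.card = 37 := by decide
lemma cardG5 : G5.card = 36 := by decide
lemma cardG6 : G6.card = 43 := by decide

end S17

open S17 in
theorem stmt17 (K : Type*) [Field K]
    (I1 I2 I3 I4 I5 I : Ideal (MvPolynomial (Fin 2) K))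
    (h1 : I1 = Ideal.span {X 0 ^ 72, X 1 ^ 72} * Ideal.span {X 0 ^ 432, X 1 ^ 432})
    (h2 : I2 = Ideal.span {X 0 ^ 162 * X 1 ^ 378} * Ideal.span {X 0 ^ 18, X 1 ^ 18} ^ 2)
    (h3 : I3 = Ideal.span {X 0 ^ 228 * X 1 ^ 318} * Ideal.span {X 0 ^ 12, X 1 ^ 12} ^ 4)
    (h4 : I4 = Ideal.span {X 0 ^ 296 * X 1 ^ 254} * Ideal.span {X 0 ^ 8, X 1 ^ 8} ^ 7)
    (h5 : I5 = Ideal.span {X 0 ^ 362 * X 1 ^ 184} * Ideal.span {X 0 ^ 2, X 1 ^ 2} ^ 34)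
    (hI : I = I1 + I2 + I3 + I4 + I5) :
    mu I = 55 ∧ mu (I ^ 2) = 41 ∧ mu (I ^ 3) = 40 ∧ mu (I ^ 4) = 37 ∧
      mu (I ^ 5) = 36 ∧ mu (I ^ 6) = 43 := by
  classical
  have hspan2 : ∀ a : ℕ, Ideal.span {X 0 ^ a, X 1 ^ a} =
      Ideal.span (mE K {(a, 0), (0, a)}) := by
    intro a
    congr 1
    rw [mE]
    rw [show ((({(a, 0), (0, a)} : Finset (ℕ × ℕ)) : Set (ℕ × ℕ)))
        = insert (a, 0) {((0 : ℕ), a)} by simp]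
    rw [Set.image_insert_eq, Set.image_singleton, mono_eq, mono_eq]
    simp
  have hspan1 : ∀ a b : ℕ, Ideal.span {X 0 ^ a * X 1 ^ b} =
      Ideal.span (mE K {(a, b)}) := by
    intro a b
    congr 1
    rw [mE]
    simp [mono_eq]
  have hS : I = Ideal.span (mE K S) := by
    rw [hI, h1, h2, h3, h4, h5,
      hspan2 72, hspan2 432, hspan1 162 378, hspan2 18, hspan1 228 318, hspan2 12,
      hspan1 296 254, hspan2 8, hspan1 362 184, hspan2 2,
      span_mE_pow, span_mE_pow, span_mE_pow, span_mE_pow,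
      span_mE_mul, span_mE_mul, span_mE_mul, span_mE_mul, span_mE_mul,
      Submodule.add_eq_sup, Submodule.add_eq_sup, Submodule.add_eq_sup, Submodule.add_eq_sup,
      span_mE_sup, span_mE_sup, span_mE_sup, span_mE_sup]
    exact le_antisymm (span_mE_le K hSdomA) (span_mE_le K hSdomB)
  have hS2 : I ^ 2 = Ideal.span (mE K G2) := by
    rw [pow_two, hS]
    exact le_antisymm (mul_le_span K _ _ _ d2a) (span_le_mul K _ _ _ d2b)
  have hS3 : I ^ 3 = Ideal.span (mE K G3) := by
    rw [show (3 : ℕ) = 2 + 1 from rfl, pow_succ, hS2, hS]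
    exact le_antisymm (mul_le_span K _ _ _ d3a) (span_le_mul K _ _ _ d3b)
  have hS4 : I ^ 4 = Ideal.span (mE K G4) := by
    rw [show (4 : ℕ) = 3 + 1 from rfl, pow_succ, hS3, hS]
    exact le_antisymm (mul_le_span K _ _ _ d4a) (span_le_mul K _ _ _ d4b)
  have hS5 : I ^ 5 = Ideal.span (mE K G5) := by
    rw [show (5 : ℕ) = 4 + 1 from rfl, pow_succ, hS4, hS]
    exact le_antisymm (mul_le_span K _ _ _ d5a) (span_le_mul K _ _ _ d5b)
  have hS6 : I ^ 6 = Ideal.span (mE K G6) := by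
    rw [show (6 : ℕ) = 5 + 1 from rfl, pow_succ, hS5, hS]
    exact le_antisymm (mul_le_span K _ _ _ d6a) (span_le_mul K _ _ _ d6b)
  refine ⟨?_, ?_, ?_, ?_, ?_, ?_⟩
  · rw [hS, mu_span_mE K S antS, cardS]
  · rw [hS2, mu_span_mE K G2 antG2, cardG2]
  · rw [hS3, mu_span_mE K G3 antG3, cardG3]
  · rw [hS4, mu_span_mE K G4 antG4, cardG4]
  · rw [hS5, mu_span_mE K G5 antG5, cardG5]
  · rw [hS6, mu_span_mE K G6 antG6, cardG6]
end
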